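/- arXiv:2407.08098 — 7 statements merged into one kernel-verified Lean document; each statement's English description precedes it below -/
import Mathlib

section
/- Fix real numbers 0 < α < β² < β < 1 and let n be sufficiently large. Let M be an n-vertex standard multigraph (loopless, edge multiplicities at most 2) with e(M) ≥ (d − α)n², and suppose every induced submultigraph M' of M on m ≥ (1−β)n vertices satisfies e(M') ≤ d·m². Then there exists an induced submultigraph M₀' of M on m ≥ (1−β)n vertices with minimum degree δ(M₀') ≥ 2(d − β)m. -/
/-!
Delete vertices of low degree greedily. Write `W(A)` for the doubled edge count of `M[A]` and
`c = 2(d - β)`. The potential `W(A) - c|A|(|A| + 1)` strictly increases when a vertex of degree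
below `c|A|` is deleted from `A`, so a set maximising it among the sets of size at least
`(1 - β)n` has minimum degree at least `c|A|`, unless it sits at the size threshold. There the
potential bound `W(A) ≥ 2(d - α)n² - c(n(n + 1) - |A|(|A| + 1))` contradicts `W(A) ≤ 2d|A|²`
for large `n`: it forces `β(n² - |A|²) ≤ αn² + O(n)`, while `β(n² - |A|²) ≈ (2β² - β³)n²`
exceeds `αn²` by more than `β²(1 - β)n²`.
-/

open Finset

/-- A standard multigraph: loop-free, with every pair of vertices joined by
at most two parallel edges (`μ` is the symmetric multiplicity function). -/
structure StdMultigraph (V : Type*) where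
  μ : V → V → ℕ
  symm : ∀ u v, μ u v = μ v u
  loopless : ∀ v, μ v v = 0
  le_two : ∀ u v, μ u v ≤ 2

namespace StdMultigraph

variable {V : Type*} (M : StdMultigraph V)

def weight (A : Finset V) : ℝ := ∑ u ∈ A, ∑ v ∈ A, (M.μ u v : ℝ)

def degreeIn (A : Finset V) (v : V) : ℝ := ∑ u ∈ A, (M.μ v u : ℝ)

def potential (c : ℝ) (A : Finset V) : ℝ := M.weight A - c * #A * (#A + 1)

theorem weight_le (A : Finset V) : M.weight A ≤ 2 * (#A : ℝ) ^ 2 :=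
  calc M.weight A ≤ ∑ _u ∈ A, ∑ _v ∈ A, (2 : ℝ) :=
        sum_le_sum fun u _ => sum_le_sum fun v _ => by exact_mod_cast M.le_two u v
    _ = 2 * (#A : ℝ) ^ 2 := by simp only [sum_const, nsmul_eq_mul]; ring

theorem le_one_of_two_mul_card_sq_le_weight {A : Finset V} (hA : A.Nonempty) {x : ℝ}
    (h : 2 * x * (#A : ℝ) ^ 2 ≤ M.weight A) : x ≤ 1 := by
  have hA2 : (0 : ℝ) < (#A : ℝ) ^ 2 := by have := hA.card_pos; positivity
  nlinarith [M.weight_le A]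

variable [DecidableEq V]

theorem weight_erase {A : Finset V} {v : V} (hv : v ∈ A) :
    M.weight (A.erase v) = M.weight A - 2 * M.degreeIn A v := by
  have hcol : ∑ u ∈ A, (M.μ u v : ℝ) = M.degreeIn A v :=
    sum_congr rfl fun u _ => by rw [M.symm]
  simp only [weight, degreeIn, sum_erase_eq_sub hv, sum_sub_distrib, hcol, M.loopless]
  simp only [CharP.cast_eq_zero]
  ring

theorem potential_lt_erase {c : ℝ} {A : Finset V} {v : V} (hv : v ∈ A)
    (hdeg : M.degreeIn A v < c * #A) : M.potential c A < M.potential c (A.erase v) := by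
  have hA : (#(A.erase v) : ℝ) = #A - 1 := by
    rw [card_erase_of_mem hv, Nat.cast_sub (card_pos.2 ⟨v, hv⟩)]; norm_num
  rw [potential, potential, M.weight_erase hv, hA]
  nlinarith

theorem exists_potential_ge_forall_le_degreeIn (c r : ℝ) {A₀ : Finset V} (h₀ : r ≤ #A₀) :
    ∃ A : Finset V, r ≤ #A ∧ M.potential c A₀ ≤ M.potential c A ∧
      (r + 1 ≤ #A → ∀ v ∈ A, c * #A ≤ M.degreeIn A v) := by
  let large := A₀.powerset.filter fun A : Finset V => r ≤ #A
  have hA₀ : A₀ ∈ large := mem_filter.2 ⟨mem_powerset_self _, h₀⟩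
  obtain ⟨A, hA, hmax⟩ := exists_max_image large (M.potential c) ⟨A₀, hA₀⟩
  obtain ⟨hAA₀, hrA⟩ := mem_filter.1 hA
  refine ⟨A, hrA, hmax A₀ hA₀, fun hbig v hv => le_of_not_gt fun hdeg => ?_⟩
  have herase : A.erase v ∈ large := by
    refine mem_filter.2 ⟨mem_powerset.2 ((erase_subset v A).trans (mem_powerset.1 hAA₀)), ?_⟩
    rw [card_erase_of_mem hv, Nat.cast_sub (card_pos.2 ⟨v, hv⟩)]
    push_cast; linarith
  exact (hmax _ herase).not_gt (M.potential_lt_erase hv hdeg)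

end StdMultigraph

theorem density_threshold_contradiction {α β d n m : ℝ} (hαβ : α < β ^ 2)
    (hβ2 : β ^ 2 < β) (hβ1 : β < 1) (hn : 4 < β ^ 2 * (1 - β) * n)
    (hm_lo : (1 - β) * n ≤ m) (hm_hi : m < (1 - β) * n + 1) (hmn : m ≤ n) (hd : d - α ≤ 1)
    (h : 2 * (d - α) * n ^ 2 - 2 * (d - β) * (n * (n + 1))
      ≤ 2 * d * m ^ 2 - 2 * (d - β) * (m * (m + 1))) : False := by
  have hβ0 : 0 < β := by nlinarith
  have hn0 : 0 < n := by nlinarith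
  have hm0 : 0 ≤ m := by nlinarith
  have hkey : β * (n ^ 2 - m ^ 2) ≤ α * n ^ 2 + β * n := by
    have : (d - β) * (n - m) ≤ n - m := by nlinarith
    nlinarith
  have hm_sq : m ^ 2 ≤ ((1 - β) * n + 1) ^ 2 := by nlinarith
  nlinarith

/-- Here `∑ u ∑ v, μ u v = 2 e(M)`, so the hypotheses and conclusion are the doubled versions of
`e(M) ≥ (d-α)n²`, `e(M') ≤ d m²`, and `δ ≥ 2(d-β)m`. -/
theorem stmt_4 :
    ∀ (α β : ℝ), 0 < α → α < β ^ 2 → β ^ 2 < β → β < 1 →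
    ∃ n₀ : ℕ, ∀ (d : ℝ) (n : ℕ), n₀ ≤ n →
    ∀ (V : Type) (_ : Fintype V) (_ : DecidableEq V) (M : StdMultigraph V),
      Fintype.card V = n →
      2 * (d - α) * (n : ℝ) ^ 2 ≤ ∑ u : V, ∑ v : V, (M.μ u v : ℝ) →
      (∀ A : Finset V, (1 - β) * (n : ℝ) ≤ A.card →
        ∑ u ∈ A, ∑ v ∈ A, (M.μ u v : ℝ) ≤ 2 * d * (A.card : ℝ) ^ 2) →
      ∃ A : Finset V, (1 - β) * (n : ℝ) ≤ A.card ∧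
        ∀ v ∈ A, 2 * (d - β) * (A.card : ℝ) ≤ ∑ u ∈ A, (M.μ v u : ℝ) := by
  intro α β _ hαβ hβ2 hβ1
  obtain ⟨n₀, hn₀⟩ := exists_nat_gt (4 / (β ^ 2 * (1 - β)))
  refine ⟨n₀, fun d n hn V _ _ M hcard hE hdens => ?_⟩
  have hc : 0 < β ^ 2 * (1 - β) := mul_pos (by nlinarith) (by linarith)
  have hn : 4 < β ^ 2 * (1 - β) * n := by
    rw [div_lt_iff₀ hc] at hn₀
    nlinarith [(Nat.cast_le (α := ℝ)).2 hn]
  have hn_pos : 0 < n := Nat.cast_pos.1 (by nlinarith : (0 : ℝ) < n)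
  have hV : (univ : Finset V).Nonempty :=
    univ_nonempty_iff.2 (Fintype.card_pos_iff.1 (hcard ▸ hn_pos))
  have hcard_univ : (#(univ : Finset V) : ℝ) = n := by rw [card_univ, hcard]
  have hE' : 2 * (d - α) * (#(univ : Finset V) : ℝ) ^ 2 ≤ M.weight univ := hcard_univ ▸ hE
  have hd : d - α ≤ 1 := M.le_one_of_two_mul_card_sq_le_weight hV hE'
  obtain ⟨A, hA_lo, hΦ, hmin⟩ := M.exists_potential_ge_forall_le_degreeIn
    (2 * (d - β)) ((1 - β) * n) (A₀ := univ) (by rw [hcard_univ]; nlinarith)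
  refine ⟨A, hA_lo, fun v hv => ?_⟩
  by_cases hbig : (1 - β) * n + 1 ≤ (#A : ℝ)
  · exact hmin hbig v hv
  refine (density_threshold_contradiction hαβ hβ2 hβ1 hn hA_lo (not_le.1 hbig) ?_ hd ?_).elim
  · rw [← hcard_univ]; exact_mod_cast card_le_univ A
  · have hWA : M.weight A ≤ 2 * d * (#A : ℝ) ^ 2 := hdens A hA_lo
    simp only [StdMultigraph.potential, hcard_univ] at hΦ hE'
    linarith
end

section
/- Let s ≥ 2 be an integer and M an n-vertex standard multigraph with δ(M) ≥ 2(1 − 1/(s−1) − α)n. Let U ⊆ V(M) satisfy |U| ≥ (2/(s−1) − β)n and suppose no three vertices of U span five or more edges of M (counted with multiplicity). Then every u ∈ U satisfies d_H(u, V∖U) ≥ |V∖U| − (4α + 2β)n, where H is the graph of heavy edges of M. -/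
open Finset

/-!
If `u ∈ U` has a heavy neighbour `x ∈ U`, then the triple condition forces
`μ(x,y) + μ(u,y) ≤ 2` for every `y ∈ U`, so `d(u,U) ≤ 2n - d(x) ≤ 2n - δ`; otherwise
`d(u,U) ≤ |U|`. Either way `d(u,U) ≤ |U| + (2α+β)n`, so `d(u,V∖U) ≥ 2|V∖U| - (4α+2β)n`,
and since `μ(u,w) ≤ 1 + [μ(u,w) = 2]`, at least `|V∖U| - (4α+2β)n` vertices of `V∖U`
are heavy neighbours of `u`.
-/

namespace StdMultigraph

variable {V : Type*} (M : StdMultigraph V)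

def NoFiveEdgeTriple (U : Finset V) : Prop :=
  ∀ x ∈ U, ∀ y ∈ U, ∀ z ∈ U, x ≠ y → y ≠ z → x ≠ z → M.μ x y + M.μ y z + M.μ x z ≤ 4

theorem sum_le_two_mul_card (u : V) (W : Finset V) : ∑ w ∈ W, M.μ u w ≤ 2 * #W := by
  simpa [mul_comm] using sum_le_card_nsmul W (M.μ u) 2 fun w _ => M.le_two u w

theorem sum_le_card_add_card_heavy (u : V) (W : Finset V) :
    ∑ w ∈ W, M.μ u w ≤ #W + #(W.filter fun w => M.μ u w = 2) := by
  rw [card_filter, card_eq_sum_ones, ← sum_add_distrib]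
  refine sum_le_sum fun w _ => ?_
  have := M.le_two u w
  split_ifs <;> omega

theorem sum_le_card_of_forall_ne_two {u : V} {W : Finset V} (h : ∀ w ∈ W, M.μ u w ≠ 2) :
    ∑ w ∈ W, M.μ u w ≤ #W := by
  simpa [filter_false_of_mem h] using M.sum_le_card_add_card_heavy u W

theorem add_le_two_of_heavy [DecidableEq V] {U : Finset V} (hU : M.NoFiveEdgeTriple U)
    {u x y : V} (hu : u ∈ U) (hx : x ∈ U) (hy : y ∈ U) (hux : M.μ u x = 2) :
    M.μ x y + M.μ u y ≤ 2 := by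
  have hxy := M.symm x y
  have hyu := M.symm u y
  have hux' := M.symm u x
  have hu0 := M.loopless u
  have hx0 := M.loopless x
  by_cases hyu : y = u
  · subst hyu; omega
  by_cases hyx : y = x
  · subst hyx; omega
  have hne : u ≠ x := by rintro rfl; omega
  have := hU u hu x hx y hy hne (Ne.symm hyx) (Ne.symm hyu)
  omega

theorem sum_add_degree_le_of_heavy [Fintype V] [DecidableEq V] {U : Finset V}
    (hU : M.NoFiveEdgeTriple U) {u x : V} (hu : u ∈ U) (hx : x ∈ U) (hux : M.μ u x = 2) :
    ∑ w ∈ U, M.μ u w + ∑ w, M.μ x w ≤ 2 * Fintype.card V := by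
  have hin : ∑ w ∈ U, (M.μ x w + M.μ u w) ≤ 2 * #U := by
    simpa [mul_comm] using
      sum_le_card_nsmul U _ 2 fun y hy => M.add_le_two_of_heavy hU hu hx hy hux
  have hout := M.sum_le_two_mul_card x Uᶜ
  rw [← sum_add_sum_compl U, sum_add_distrib] at *
  have := card_add_card_compl U
  omega

theorem sum_le_max_of_minDegree [Fintype V] [DecidableEq V] {U : Finset V}
    (hU : M.NoFiveEdgeTriple U) {u : V} (hu : u ∈ U) {δ : ℝ}
    (hδ : ∀ v, δ ≤ ∑ w, (M.μ v w : ℝ)) :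
    ∑ w ∈ U, (M.μ u w : ℝ) ≤ max (#U : ℝ) (2 * Fintype.card V - δ) := by
  by_cases h : ∃ x ∈ U, M.μ u x = 2
  · obtain ⟨x, hx, hux⟩ := h
    have key : ∑ w ∈ U, (M.μ u w : ℝ) + ∑ w, (M.μ x w : ℝ) ≤ 2 * Fintype.card V := by
      exact_mod_cast M.sum_add_degree_le_of_heavy hU hu hx hux
    exact le_max_of_le_right (by linarith [hδ x])
  · push Not at h
    exact le_max_of_le_left (by exact_mod_cast M.sum_le_card_of_forall_ne_two h)

end StdMultigraph

theorem stmt_6_general {V : Type*} [Fintype V] [DecidableEq V] (s : ℕ)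
    (α β : ℝ) (hα0 : 0 < α) (hβ0 : 0 < β)
    (M : StdMultigraph V) (n : ℕ) (hn : Fintype.card V = n)
    (hδ : ∀ v : V, 2 * (1 - 1 / ((s : ℝ) - 1) - α) * (n : ℝ) ≤ ∑ u : V, (M.μ v u : ℝ))
    (U : Finset V)
    (htriple : ∀ x ∈ U, ∀ y ∈ U, ∀ z ∈ U, x ≠ y → y ≠ z → x ≠ z →
      M.μ x y + M.μ y z + M.μ x z ≤ 4)
    (hU : (2 / ((s : ℝ) - 1) - β) * (n : ℝ) ≤ U.card) :
    ∀ u ∈ U, ((Uᶜ : Finset V).card : ℝ) - (4 * α + 2 * β) * n ≤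
      (((Uᶜ : Finset V).filter (fun w => M.μ u w = 2)).card : ℝ) := by
  intro u hu
  have hin := M.sum_le_max_of_minDegree htriple hu hδ
  have hout : (∑ w ∈ Uᶜ, M.μ u w : ℝ) ≤ #Uᶜ + #(Uᶜ.filter fun w => M.μ u w = 2) := by
    exact_mod_cast M.sum_le_card_add_card_heavy u Uᶜ
  have hsplit := sum_add_sum_compl U fun w => (M.μ u w : ℝ)
  have hcard : (#U + #Uᶜ : ℝ) = n := by exact_mod_cast hn ▸ card_add_card_compl U
  have hslack : 0 ≤ (2 * α + β) * n := by positivity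
  rw [div_eq_mul_one_div 2] at hU
  rw [hn] at hin
  have hdu := hδ u
  rcases le_max_iff.mp hin with h | h <;> linarith

/-- In a standard multigraph with `δ(M) ≥ 2(1 - 1/(s-1) - α)n`,
if `U` has size at least `(2/(s-1) - β)n` and no three (distinct) vertices of `U`
span five or more edges, then every `u ∈ U` has at least `|V∖U| - (4α+2β)n` heavy
neighbors outside `U`. -/
theorem stmt_6 {V : Type*} [Fintype V] [DecidableEq V] (s : ℕ) (hs : 2 ≤ s)
    (α β : ℝ) (hα0 : 0 < α) (hα1 : α < 1) (hβ0 : 0 < β) (hβ1 : β < 1)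
    (M : StdMultigraph V) (n : ℕ) (hn : Fintype.card V = n)
    (hδ : ∀ v : V, 2 * (1 - 1 / ((s : ℝ) - 1) - α) * (n : ℝ) ≤ ∑ u : V, (M.μ v u : ℝ))
    (U : Finset V)
    (htriple : ∀ x ∈ U, ∀ y ∈ U, ∀ z ∈ U, x ≠ y → y ≠ z → x ≠ z →
      M.μ x y + M.μ y z + M.μ x z ≤ 4)
    (hU : (2 / ((s : ℝ) - 1) - β) * (n : ℝ) ≤ U.card) :
    ∀ u ∈ U, ((Uᶜ : Finset V).card : ℝ) - (4 * α + 2 * β) * n ≤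
      (((Uᶜ : Finset V).filter (fun w => M.μ u w = 2)).card : ℝ) :=
  stmt_6_general s α β hα0 hβ0 M n hn hδ U htriple hU
end

section
/- Let s ≥ 2 be an integer and M an n-vertex standard multigraph with e(M) > (1 − 1/(s−1))n². Then there exists an s-element vertex subset S such that the complement multigraph M̄ restricted to S consists of a matching of q light edges for some integer 0 ≤ q ≤ s/2; equivalently, M[S] contains the structure 𝕂_s − ℳ_q: all pairs in S have multiplicity 2 except for q disjoint pairs which have multiplicity exactly 1. -/
open Finset

/-- `M` contains `𝕂_s − ℳ_q`: an `s`-set `S` of vertices together with `q` pairwise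
vertex-disjoint pairs inside `S` of multiplicity exactly `1`, all other pairs in `S`
having multiplicity `2`. -/
def HasKMinusMatching {V : Type*} (M : StdMultigraph V) (s q : ℕ) : Prop :=
  ∃ (S : Finset V) (T : Finset (V × V)),
    S.card = s ∧ T.card = q ∧
    (∀ p ∈ T, p.1 ∈ S ∧ p.2 ∈ S ∧ p.1 ≠ p.2 ∧ M.μ p.1 p.2 = 1) ∧
    (∀ p ∈ T, ∀ p' ∈ T, p ≠ p' →
      p.1 ≠ p'.1 ∧ p.1 ≠ p'.2 ∧ p.2 ≠ p'.1 ∧ p.2 ≠ p'.2) ∧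
    (∀ u ∈ S, ∀ v ∈ S, u ≠ v → (u, v) ∉ T → (v, u) ∉ T → M.μ u v = 2)

/-- Auxiliary: a copy of `𝕂_s − ℳ_q` inside a vertex subset `U`. -/
def GoodIn {V : Type*} (M : StdMultigraph V) (U : Finset V) (s q : ℕ) : Prop :=
  ∃ (S : Finset V) (T : Finset (V × V)),
    S ⊆ U ∧ S.card = s ∧ T.card = q ∧
    (∀ p ∈ T, p.1 ∈ S ∧ p.2 ∈ S ∧ p.1 ≠ p.2 ∧ M.μ p.1 p.2 = 1) ∧
    (∀ p ∈ T, ∀ p' ∈ T, p ≠ p' →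
      p.1 ≠ p'.1 ∧ p.1 ≠ p'.2 ∧ p.2 ≠ p'.1 ∧ p.2 ≠ p'.2) ∧
    (∀ u ∈ S, ∀ v ∈ S, u ≠ v → (u, v) ∉ T → (v, u) ∉ T → M.μ u v = 2)

theorem main_aux {V : Type*} [DecidableEq V] (M : StdMultigraph V) :
    ∀ t : ℕ, ∀ U : Finset V,
      2 * t * (U.card * U.card) < (t + 1) * (∑ u ∈ U, ∑ v ∈ U, M.μ u v) →
      ∃ q : ℕ, 2 * q ≤ t + 2 ∧ GoodIn M U (t + 2) q := by
  intro t
  induction t with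
  | zero =>
    intro U hU
    simp only [Nat.mul_zero, Nat.zero_mul, Nat.one_mul] at hU
    -- the sum is positive, find a pair with μ ≥ 1
    have h1 : ∃ u ∈ U, 0 < ∑ v ∈ U, M.μ u v := by
      by_contra h
      push_neg at h
      have : ∑ u ∈ U, ∑ v ∈ U, M.μ u v = 0 :=
        Finset.sum_eq_zero fun u hu => Nat.le_zero.mp (h u hu)
      omega
    obtain ⟨u, hu, hsu⟩ := h1
    have h2 : ∃ v ∈ U, 0 < M.μ u v := by
      by_contra h
      push_neg at h
      have : ∑ v ∈ U, M.μ u v = 0 :=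
        Finset.sum_eq_zero fun v hv => Nat.le_zero.mp (h v hv)
      omega
    obtain ⟨v, hv, hμ⟩ := h2
    have huv : u ≠ v := by
      intro h; rw [h, M.loopless] at hμ; omega
    have hS : ({u, v} : Finset V) ⊆ U := by
      intro x hx
      rcases Finset.mem_insert.mp hx with h | h
      · exact h ▸ hu
      · exact (Finset.mem_singleton.mp h) ▸ hv
    have hcard : ({u, v} : Finset V).card = 2 := by
      rw [Finset.card_insert_of_notMem (by simp [huv]), Finset.card_singleton]
    have hμ2 : M.μ u v = 1 ∨ M.μ u v = 2 := by
      have := M.le_two u v; omega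
    rcases hμ2 with h1 | h2
    · refine ⟨1, by omega, {u, v}, {(u, v)}, hS, hcard, rfl, ?_, ?_, ?_⟩
      · intro p hp
        rw [Finset.mem_singleton] at hp
        subst hp
        exact ⟨by simp, by simp, huv, h1⟩
      · intro p hp p' hp' hne
        rw [Finset.mem_singleton] at hp hp'
        exact absurd (hp.trans hp'.symm) hne
      · intro x hx y hy hxy hT hT'
        simp only [Finset.mem_insert, Finset.mem_singleton] at hx hy
        rcases hx with rfl | rfl <;> rcases hy with rfl | rfl
        · exact absurd rfl hxy
        · exact absurd (Finset.mem_singleton_self _) hT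
        · exact absurd (Finset.mem_singleton_self _) hT'
        · exact absurd rfl hxy
    · refine ⟨0, by omega, {u, v}, ∅, hS, hcard, rfl, ?_, ?_, ?_⟩
      · intro p hp; exact absurd hp (Finset.notMem_empty p)
      · intro p hp; exact absurd hp (Finset.notMem_empty p)
      · intro x hx y hy hxy _ _
        simp only [Finset.mem_insert, Finset.mem_singleton] at hx hy
        rcases hx with rfl | rfl <;> rcases hy with rfl | rfl
        · exact absurd rfl hxy
        · exact h2
        · exact (M.symm y x) ▸ h2
        · exact absurd rfl hxy
  | succ t ih =>
    intro U
    induction U using Finset.strongInduction with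
    | _ U ihU =>
    intro hU
    classical
    set n := U.card with hn
    set E := ∑ u ∈ U, ∑ v ∈ U, M.μ u v with hE
    -- derive the hypothesis for t
    have hyp_t : 2 * t * (n * n) < (t + 1) * E := by
      have h1 : (t + 2) * (2 * t * (n * n)) ≤ (t + 1) * (2 * (t + 1) * (n * n)) := by
        nlinarith
      have h2 : (t + 1) * (2 * (t + 1) * (n * n)) < (t + 1) * ((t + 2) * E) :=
        mul_lt_mul_of_pos_left hU (by omega)
      have h3 : (t + 2) * (2 * t * (n * n)) < (t + 2) * ((t + 1) * E) := by
        calc (t + 2) * (2 * t * (n * n)) ≤ (t + 1) * (2 * (t + 1) * (n * n)) := h1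
        _ < (t + 1) * ((t + 2) * E) := h2
        _ = (t + 2) * ((t + 1) * E) := by ring
      exact Nat.lt_of_mul_lt_mul_left h3
    -- minimal q' with a copy of size t+2
    have hex : ∃ q, 2 * q ≤ t + 2 ∧ GoodIn M U (t + 2) q := ih U hyp_t
    set P : ℕ → Prop := fun q => 2 * q ≤ t + 2 ∧ GoodIn M U (t + 2) q with hP
    have hPex : ∃ q, P q := hex
    obtain ⟨hq', A, T', hAU, hAcard, hT'card, hc3, hc4, hc5⟩ := Nat.find_spec hPex
    set q' := Nat.find hPex with hq'def
    -- Case I : some outside vertex is heavy to all of A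
    by_cases hI : ∃ v ∈ U \ A, ∀ a ∈ A, M.μ v a = 2
    · obtain ⟨v, hv, hall⟩ := hI
      have hvU : v ∈ U := (Finset.mem_sdiff.mp hv).1
      have hvA : v ∉ A := (Finset.mem_sdiff.mp hv).2
      refine ⟨q', by omega, insert v A, T', ?_, ?_, hT'card, ?_, hc4, ?_⟩
      · exact Finset.insert_subset hvU hAU
      · rw [Finset.card_insert_of_notMem hvA, hAcard]
      · intro p hp
        obtain ⟨h1, h2, h3, h4⟩ := hc3 p hp
        exact ⟨Finset.mem_insert_of_mem h1, Finset.mem_insert_of_mem h2, h3, h4⟩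
      · intro x hx y hy hxy hT hT'
        rcases Finset.mem_insert.mp hx with rfl | hxA
        · rcases Finset.mem_insert.mp hy with rfl | hyA
          · exact absurd rfl hxy
          · exact hall y hyA
        · rcases Finset.mem_insert.mp hy with rfl | hyA
          · rw [M.symm]; exact hall x hxA
          · exact hc5 x hxA y hyA hxy hT hT'
    · -- Case II : some outside vertex has exactly one light pair to A, rest heavy
      by_cases hII : ∃ v ∈ U \ A, ∃ a ∈ A, M.μ v a = 1 ∧ ∀ b ∈ A, b ≠ a → M.μ v b = 2
      · obtain ⟨v, hv, a, haA, hμva, hrest⟩ := hII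
        have hvU : v ∈ U := (Finset.mem_sdiff.mp hv).1
        have hvA : v ∉ A := (Finset.mem_sdiff.mp hv).2
        have hva : v ≠ a := fun h => hvA (h ▸ haA)
        by_cases hmatched : ∃ p ∈ T', p.1 = a ∨ p.2 = a
        · -- contradiction with minimality of q'
          exfalso
          obtain ⟨p, hpT, hpa⟩ := hmatched
          have hq'pos : 1 ≤ q' := by
            rw [← hT'card]
            exact Finset.card_pos.mpr ⟨p, hpT⟩
          have : P (q' - 1) := by
            constructor
            · omega
            refine ⟨insert v (A.erase a), T'.erase p, ?_, ?_, ?_, ?_, ?_, ?_⟩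
            · exact Finset.insert_subset hvU ((Finset.erase_subset a A).trans hAU)
            · rw [Finset.card_insert_of_notMem
                (fun h => hvA (Finset.mem_of_mem_erase h)),
                Finset.card_erase_of_mem haA, hAcard]
              omega
            · rw [Finset.card_erase_of_mem hpT, hT'card]
            · intro q hq
              have hqT : q ∈ T' := Finset.mem_of_mem_erase hq
              have hqp : q ≠ p := Finset.ne_of_mem_erase hq
              obtain ⟨h1, h2, h3, h4⟩ := hc3 q hqT
              obtain ⟨d1, d2, d3, d4⟩ := hc4 q hqT p hpT hqp
              have hq1a : q.1 ≠ a := by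
                rcases hpa with h | h
                · exact h ▸ d1
                · exact h ▸ d2
              have hq2a : q.2 ≠ a := by
                rcases hpa with h | h
                · exact h ▸ d3
                · exact h ▸ d4
              exact ⟨Finset.mem_insert_of_mem (Finset.mem_erase.mpr ⟨hq1a, h1⟩),
                Finset.mem_insert_of_mem (Finset.mem_erase.mpr ⟨hq2a, h2⟩), h3, h4⟩
            · intro q hq q2 hq2 hne
              exact hc4 q (Finset.mem_of_mem_erase hq) q2 (Finset.mem_of_mem_erase hq2) hne
            · intro x hx y hy hxy hT hT2
              rcases Finset.mem_insert.mp hx with rfl | hxA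
              · rcases Finset.mem_insert.mp hy with rfl | hyA
                · exact absurd rfl hxy
                · exact hrest y (Finset.mem_of_mem_erase hyA) (Finset.ne_of_mem_erase hyA)
              · rcases Finset.mem_insert.mp hy with rfl | hyA
                · rw [M.symm]
                  exact hrest x (Finset.mem_of_mem_erase hxA) (Finset.ne_of_mem_erase hxA)
                · -- both in A.erase a
                  have hxA' : x ∈ A := Finset.mem_of_mem_erase hxA
                  have hyA' : y ∈ A := Finset.mem_of_mem_erase hyA
                  have hxa : x ≠ a := Finset.ne_of_mem_erase hxA
                  have hya : y ≠ a := Finset.ne_of_mem_erase hyA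
                  apply hc5 x hxA' y hyA' hxy
                  · intro hmem
                    rcases eq_or_ne (x, y) p with heq | hne2
                    · rcases hpa with h | h
                      · exact hxa (by rw [← heq] at h; exact h.symm ▸ rfl)
                      · exact hya (by rw [← heq] at h; exact h.symm ▸ rfl)
                    · exact hT (Finset.mem_erase.mpr ⟨hne2, hmem⟩)
                  · intro hmem
                    rcases eq_or_ne (y, x) p with heq | hne2
                    · rcases hpa with h | h
                      · exact hya (by rw [← heq] at h; exact h.symm ▸ rfl)
                      · exact hxa (by rw [← heq] at h; exact h.symm ▸ rfl)
                    · exact hT2 (Finset.mem_erase.mpr ⟨hne2, hmem⟩)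
          exact Nat.find_min hPex (by omega) this
        · -- a is unmatched: extend with the pair (v, a)
          push_neg at hmatched
          -- matched vertices form a set of size 2q' inside A.erase a
          have hbi : (T'.biUnion fun p => ({p.1, p.2} : Finset V)).card = 2 * q' := by
            have hdisj : ∀ p ∈ T', ∀ p2 ∈ T', p ≠ p2 →
                Disjoint ({p.1, p.2} : Finset V) ({p2.1, p2.2} : Finset V) := by
              intro p hp p2 hp2 hne
              obtain ⟨d1, d2, d3, d4⟩ := hc4 p hp p2 hp2 hne
              simp only [Finset.disjoint_left, Finset.mem_insert, Finset.mem_singleton]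
              rintro x (rfl | rfl) (h | h)
              · exact d1 h
              · exact d2 h
              · exact d3 h
              · exact d4 h
            rw [Finset.card_biUnion hdisj]
            have hc2 : ∀ p ∈ T', ({p.1, p.2} : Finset V).card = 2 := by
              intro p hp
              have hne := (hc3 p hp).2.2.1
              rw [Finset.card_insert_of_notMem (by simp [hne]), Finset.card_singleton]
            rw [Finset.sum_congr rfl hc2, Finset.sum_const, smul_eq_mul, hT'card]
            ring
          have hbisub : (T'.biUnion fun p => ({p.1, p.2} : Finset V)) ⊆ A.erase a := by
            intro x hx
            obtain ⟨p, hp, hxp⟩ := Finset.mem_biUnion.mp hx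
            obtain ⟨h1, h2, _, _⟩ := hc3 p hp
            rcases Finset.mem_insert.mp hxp with rfl | hxp'
            · exact Finset.mem_erase.mpr ⟨fun h => (hmatched p hp).1 h, h1⟩
            · rw [Finset.mem_singleton] at hxp'
              subst hxp'
              exact Finset.mem_erase.mpr ⟨fun h => (hmatched p hp).2 h, h2⟩
          have hq'le : 2 * q' ≤ t + 1 := by
            have := Finset.card_le_card hbisub
            rw [hbi, Finset.card_erase_of_mem haA, hAcard] at this
            omega
          have hvaT : (v, a) ∉ T' := fun h => hvA ((hc3 _ h).1)
          refine ⟨q' + 1, by omega, insert v A, insert (v, a) T', ?_, ?_, ?_, ?_, ?_, ?_⟩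
          · exact Finset.insert_subset hvU hAU
          · rw [Finset.card_insert_of_notMem hvA, hAcard]
          · rw [Finset.card_insert_of_notMem hvaT, hT'card]
          · intro p hp
            rcases Finset.mem_insert.mp hp with rfl | hpT
            · exact ⟨Finset.mem_insert_self _ _, Finset.mem_insert_of_mem haA, hva, hμva⟩
            · obtain ⟨h1, h2, h3, h4⟩ := hc3 p hpT
              exact ⟨Finset.mem_insert_of_mem h1, Finset.mem_insert_of_mem h2, h3, h4⟩
          · intro p hp p2 hp2 hne
            rcases Finset.mem_insert.mp hp with rfl | hpT <;>
              rcases Finset.mem_insert.mp hp2 with rfl | hp2T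
            · exact absurd rfl hne
            · obtain ⟨h1, h2, _, _⟩ := hc3 p2 hp2T
              have hma := hmatched p2 hp2T
              exact ⟨fun h => hvA (by rw [show v = p2.1 from h]; exact h1),
                fun h => hvA (by rw [show v = p2.2 from h]; exact h2),
                fun h => hma.1 (show p2.1 = a from h.symm),
                fun h => hma.2 (show p2.2 = a from h.symm)⟩
            · obtain ⟨h1, h2, _, _⟩ := hc3 p hpT
              have hma := hmatched p hpT
              exact ⟨fun h => hvA (by rw [← show p.1 = v from h]; exact h1),
                fun h => hma.1 h,
                fun h => hvA (by rw [← show p.2 = v from h]; exact h2),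
                fun h => hma.2 h⟩
            · exact hc4 p hpT p2 hp2T hne
          · intro x hx y hy hxy hT hT2
            rcases Finset.mem_insert.mp hx with rfl | hxA
            · rcases Finset.mem_insert.mp hy with rfl | hyA
              · exact absurd rfl hxy
              · have hya : y ≠ a := fun h => hT (h ▸ Finset.mem_insert_self _ _)
                exact hrest y hyA hya
            · rcases Finset.mem_insert.mp hy with rfl | hyA
              · have hxa : x ≠ a := fun h => hT2 (h ▸ Finset.mem_insert_self _ _)
                rw [M.symm]
                exact hrest x hxA hxa
              · exact hc5 x hxA y hyA hxy
                  (fun h => hT (Finset.mem_insert_of_mem h))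
                  (fun h => hT2 (Finset.mem_insert_of_mem h))
      · -- Case III : every outside vertex has weight at most 2(t+2) - 2 to A
        push_neg at hI hII
        have key : ∀ v ∈ U \ A, (∑ a ∈ A, M.μ v a) + 2 ≤ 2 * (t + 2) := by
          intro v hv
          obtain ⟨a, haA, hμa2⟩ := hI v hv
          have hμa : M.μ v a ≤ 1 := by have := M.le_two v a; omega
          have hsplit : M.μ v a + ∑ b ∈ A.erase a, M.μ v b = ∑ b ∈ A, M.μ v b :=
            Finset.add_sum_erase A (fun b => M.μ v b) haA
          have herase_le : ∑ b ∈ A.erase a, M.μ v b ≤ 2 * (t + 1) := by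
            calc ∑ b ∈ A.erase a, M.μ v b ≤ ∑ _b ∈ A.erase a, 2 :=
              Finset.sum_le_sum fun b _ => M.le_two v b
            _ = 2 * (t + 1) := by
              rw [Finset.sum_const, smul_eq_mul, Finset.card_erase_of_mem haA, hAcard]
              omega
          by_contra hcon
          -- then μ v a = 1 and all others are 2
          have hμa1 : M.μ v a = 1 := by omega
          have herase_eq : ∑ b ∈ A.erase a, M.μ v b = 2 * (t + 1) := by omega
          have hall2 : ∀ b ∈ A.erase a, M.μ v b = 2 := by
            intro b hb
            by_contra hb2
            have hble : M.μ v b ≤ 1 := by have := M.le_two v b; omega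
            have hsplit2 : M.μ v b + ∑ c ∈ (A.erase a).erase b, M.μ v c
                = ∑ c ∈ A.erase a, M.μ v c :=
              Finset.add_sum_erase _ (fun c => M.μ v c) hb
            have : ∑ c ∈ (A.erase a).erase b, M.μ v c ≤ 2 * t := by
              calc ∑ c ∈ (A.erase a).erase b, M.μ v c ≤ ∑ _c ∈ (A.erase a).erase b, 2 :=
                Finset.sum_le_sum fun c _ => M.le_two v c
              _ = 2 * t := by
                rw [Finset.sum_const, smul_eq_mul, Finset.card_erase_of_mem hb,
                  Finset.card_erase_of_mem haA, hAcard]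
                omega
            omega
          obtain ⟨b, hbA, hba, hb2⟩ := hII v hv a haA hμa1
          exact hb2 (hall2 b (Finset.mem_erase.mpr ⟨hba, hbA⟩))
        -- decompose the edge sum
        set m := (U \ A).card with hm
        have hnm : n = m + (t + 2) := by
          rw [hm, Finset.card_sdiff_of_subset hAU, hAcard]
          have := Finset.card_le_card hAU
          rw [hAcard] at this
          omega
        set Eout := ∑ u ∈ U \ A, ∑ v ∈ U \ A, M.μ u v with hEout
        set W := ∑ u ∈ U \ A, ∑ v ∈ A, M.μ u v with hW
        set EA := ∑ u ∈ A, ∑ v ∈ A, M.μ u v with hEA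
        have hdecomp : E = Eout + 2 * W + EA := by
          have inner : ∀ u : V, ∑ v ∈ U, M.μ u v
              = ∑ v ∈ U \ A, M.μ u v + ∑ v ∈ A, M.μ u v := fun u =>
            (Finset.sum_sdiff hAU).symm
          have h1 : E = ∑ u ∈ U \ A, (∑ v ∈ U \ A, M.μ u v + ∑ v ∈ A, M.μ u v)
              + ∑ u ∈ A, (∑ v ∈ U \ A, M.μ u v + ∑ v ∈ A, M.μ u v) := by
            rw [hE, ← Finset.sum_sdiff hAU]
            rw [Finset.sum_congr rfl fun u _ => inner u,
              Finset.sum_congr rfl fun u (_ : u ∈ A) => inner u]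
          have hswap : ∑ u ∈ A, ∑ v ∈ U \ A, M.μ u v = W := by
            rw [hW, Finset.sum_comm]
            exact Finset.sum_congr rfl fun x _ => Finset.sum_congr rfl fun y _ => M.symm y x
          rw [h1, Finset.sum_add_distrib, Finset.sum_add_distrib, hswap, ← hEout, ← hW, ← hEA]
          ring
        have hWle : W + 2 * m ≤ 2 * (t + 2) * m := by
          have h1 : W + 2 * m = ∑ u ∈ U \ A, ((∑ v ∈ A, M.μ u v) + 2) := by
            rw [Finset.sum_add_distrib, Finset.sum_const, smul_eq_mul, hW, hm]
            ring
          have h2 : ∑ u ∈ U \ A, ((∑ v ∈ A, M.μ u v) + 2) ≤ ∑ u ∈ U \ A, 2 * (t + 2) :=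
            Finset.sum_le_sum key
          have h3 : (∑ u ∈ U \ A, 2 * (t + 2)) = 2 * (t + 2) * m := by
            rw [Finset.sum_const, smul_eq_mul, hm]
            ring
          rw [h1, ← h3]
          exact h2
        have hEAle : EA ≤ (t + 2) * (2 * (t + 1)) := by
          have h1 : ∀ u ∈ A, ∑ v ∈ A, M.μ u v ≤ 2 * (t + 1) := by
            intro u hu
            have hh : ∑ v ∈ A, M.μ u v = M.μ u u + ∑ v ∈ A.erase u, M.μ u v :=
              (Finset.add_sum_erase A (fun v => M.μ u v) hu).symm
            rw [M.loopless, Nat.zero_add] at hh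
            rw [hh]
            have h2 : ∑ v ∈ A.erase u, M.μ u v ≤ ∑ v ∈ A.erase u, 2 :=
              Finset.sum_le_sum fun v _ => M.le_two u v
            have h3 : (∑ v ∈ A.erase u, 2) = (t + 1) * 2 := by
              rw [Finset.sum_const, smul_eq_mul, Finset.card_erase_of_mem hu, hAcard]
              omega
            omega
          have h4 : EA ≤ ∑ u ∈ A, 2 * (t + 1) := by
            rw [hEA]; exact Finset.sum_le_sum h1
          have h5 : (∑ u ∈ A, 2 * (t + 1)) = (t + 2) * (2 * (t + 1)) := by
            rw [Finset.sum_const, smul_eq_mul, hAcard]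
          rw [← h5]
          exact h4
        -- either recurse into U \ A or get a contradiction
        by_cases hrec : 2 * (t + 1) * (m * m) < (t + 2) * Eout
        · have hss : U \ A ⊂ U := Finset.sdiff_ssubset hAU
            (Finset.card_pos.mp (by rw [hAcard]; omega))
          obtain ⟨q, hq, S, T, hSsub, rest⟩ := ihU (U \ A) hss (by
            rw [hm, hEout] at hrec
            exact hrec)
          exact ⟨q, hq, S, T, hSsub.trans Finset.sdiff_subset, rest⟩
        · exfalso
          push_neg at hrec
          have hWle2 : W ≤ 2 * (t + 1) * m := by
            have heq : 2 * (t + 2) * m = 2 * (t + 1) * m + 2 * m := by ring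
            rw [heq] at hWle
            exact le_of_add_le_add_right hWle
          have c1 : (t + 2) * E = (t + 2) * Eout + 2 * (t + 2) * W + (t + 2) * EA := by
            rw [hdecomp]; ring
          have c2 : 2 * (t + 2) * W ≤ 2 * (t + 2) * (2 * (t + 1) * m) :=
            Nat.mul_le_mul (le_refl (2 * (t + 2))) hWle2
          have c3 : (t + 2) * EA ≤ (t + 2) * ((t + 2) * (2 * (t + 1))) :=
            Nat.mul_le_mul (le_refl (t + 2)) hEAle
          have c6 : (t + 2) * Eout + 2 * (t + 2) * W + (t + 2) * EA
              ≤ 2 * (t + 1) * (m * m) + 2 * (t + 2) * (2 * (t + 1) * m)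
                + (t + 2) * ((t + 2) * (2 * (t + 1))) :=
            add_le_add (add_le_add hrec c2) c3
          have c7 : 2 * (t + 1) * (m * m) + 2 * (t + 2) * (2 * (t + 1) * m)
              + (t + 2) * ((t + 2) * (2 * (t + 1))) = 2 * (t + 1) * (n * n) := by
            rw [hnm]; ring
          have c8 : (t + 2) * E ≤ 2 * (t + 1) * (n * n) := by
            rw [c1, ← c7]; exact c6
          have c9 : 2 * (t + 1) * (n * n) < (t + 2) * E := hU
          exact Nat.lt_irrefl _ (Nat.lt_of_lt_of_le c9 c8)

/-- If an `n`-vertex standard multigraph has `e(M) > (1 - 1/(s-1))n²`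
(equivalently `∑ u ∑ v, μ u v > 2(1 - 1/(s-1))n²`), then it contains `𝕂_s − ℳ_q`
for some integer `0 ≤ q ≤ s/2`. -/
theorem stmt_8 {V : Type*} [Fintype V] [DecidableEq V] (s : ℕ) (hs : 2 ≤ s)
    (M : StdMultigraph V) (n : ℕ) (hn : Fintype.card V = n)
    (he : 2 * (1 - 1 / ((s : ℝ) - 1)) * (n : ℝ) ^ 2 < ∑ u : V, ∑ v : V, (M.μ u v : ℝ)) :
    ∃ q : ℕ, 2 * q ≤ s ∧ HasKMinusMatching M s q := by
  obtain ⟨t, rfl⟩ : ∃ t, s = t + 2 := ⟨s - 2, by omega⟩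
  set E := ∑ u : V, ∑ v : V, M.μ u v with hE
  have hcast : (∑ u : V, ∑ v : V, (M.μ u v : ℝ)) = (E : ℝ) := by
    rw [hE]; push_cast; rfl
  have hpos : (0 : ℝ) < (t : ℝ) + 1 := by positivity
  have hs1 : ((t + 2 : ℕ) : ℝ) - 1 = (t : ℝ) + 1 := by push_cast; ring
  rw [hs1, hcast] at he
  have hR : 2 * (t : ℝ) * ((n : ℝ) * (n : ℝ)) < ((t : ℝ) + 1) * (E : ℝ) := by
    have hmul := mul_lt_mul_of_pos_left he hpos
    have hne : ((t : ℝ) + 1) ≠ 0 := ne_of_gt hpos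
    have h0 : ((t : ℝ) + 1) * (1 - 1 / ((t : ℝ) + 1)) = (t : ℝ) := by
      field_simp
      ring
    have hexp : ((t : ℝ) + 1) * (2 * (1 - 1 / ((t : ℝ) + 1)) * (n : ℝ) ^ 2)
        = 2 * (t : ℝ) * ((n : ℝ) * (n : ℝ)) := by
      calc ((t : ℝ) + 1) * (2 * (1 - 1 / ((t : ℝ) + 1)) * (n : ℝ) ^ 2)
          = 2 * (((t : ℝ) + 1) * (1 - 1 / ((t : ℝ) + 1))) * (n : ℝ) ^ 2 := by ring
        _ = 2 * (t : ℝ) * ((n : ℝ) * (n : ℝ)) := by rw [h0]; ring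
    rw [hexp] at hmul
    exact hmul
  have hNat : 2 * t * (n * n) < (t + 1) * E := by exact_mod_cast hR
  have hucard : (Finset.univ : Finset V).card = n := by
    rw [Finset.card_univ, hn]
  obtain ⟨q, hq, S, T, _, rest⟩ := main_aux M t Finset.univ (by rw [hucard]; exact hNat)
  exact ⟨q, hq, S, T, rest⟩
end

section
/- Let s ≥ 2 and 0 ≤ r ≤ (s−1)/2 be integers and M an n-vertex standard multigraph with e(M) > (1 − 1/(2(s−1−r)))n². Then M contains 𝕂_s − ℳ_q for some integer 0 ≤ q ≤ r, i.e., there is an s-set S of vertices in which all pairs have multiplicity 2 except for q pairwise disjoint pairs of multiplicity exactly 1. Moreover this follows from the case bound e(M) > (1 − 1/(s'−1))n² with s' = 2s − 2r − 1 by deleting endpoints of excess light matching edges. -/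
open Finset

namespace Stmt9

set_option linter.unusedSectionVars false

variable {V : Type*} [Fintype V] [DecidableEq V]

/-- real defect: `2 - μ` off the diagonal, `0` on it. -/
noncomputable def dR (M : StdMultigraph V) (u v : V) : ℝ := if u = v then 0 else 2 - (M.μ u v : ℝ)

lemma dR_symm (M : StdMultigraph V) (u v : V) : dR M u v = dR M v u := by
  unfold dR
  rcases eq_or_ne u v with h | h
  · simp [h]
  · simp [h, h.symm, M.symm u v]

lemma dR_nonneg (M : StdMultigraph V) (u v : V) : 0 ≤ dR M u v := by
  unfold dR
  rcases eq_or_ne u v with h | h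
  · simp [h]
  · have := M.le_two u v
    simp only [h, if_false, sub_nonneg]
    exact_mod_cast this

lemma dR_le_two (M : StdMultigraph V) (u v : V) : dR M u v ≤ 2 := by
  unfold dR
  rcases eq_or_ne u v with h | h
  · simp [h]
  · have : (0:ℝ) ≤ (M.μ u v : ℕ) := by positivity
    simp only [h, if_false]
    linarith

/-- the quadratic potential. -/
noncomputable def RQ (M : StdMultigraph V) (x : V → ℝ) : ℝ :=
  (∑ v, (x v)^2) + (1/2) * ∑ w, x w * (∑ z, dR M w z * x z)

/-- the gradient coordinate. -/
noncomputable def gQ (M : StdMultigraph V) (x : V → ℝ) (w : V) : ℝ :=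
  2 * x w + ∑ z, dR M w z * x z

/-- elementary shift direction -/
noncomputable def del (u v : V) (w : V) : ℝ := (if w = v then 1 else 0) - (if w = u then 1 else 0)

lemma sum_mul_del (u v : V) (c : V → ℝ) :
    ∑ w, c w * del u v w = c v - c u := by
  unfold del
  simp [mul_sub, Finset.sum_sub_distrib, mul_ite, mul_one, mul_zero, Finset.sum_ite_eq']

lemma del_self_u (u v : V) (h : u ≠ v) : del u v u = -1 := by simp [del, h]
lemma del_self_v (u v : V) (h : u ≠ v) : del u v v = 1 := by simp [del, h.symm]

lemma sum_del (u v : V) : ∑ w, del u v w = 0 := by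
  have := sum_mul_del u v (fun _ => (1:ℝ))
  simpa using this

/-- Key expansion of `RQ` along a two-point shift. -/
lemma RQ_shift (M : StdMultigraph V) (x : V → ℝ) (u v : V) (huv : u ≠ v) (t : ℝ) :
    RQ M (fun w => x w + t * del u v w)
      = RQ M x + t * (gQ M x v - gQ M x u) + t^2 * (2 - dR M u v) := by
  have hrow : ∀ a : V, (∑ z, dR M a z * (x z + t * del u v z))
      = (∑ z, dR M a z * x z) + t * (dR M a v - dR M a u) := by
    intro a
    have h1 : ∀ z, dR M a z * (x z + t * del u v z)
        = dR M a z * x z + t * (dR M a z * del u v z) := by intro z; ring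
    rw [Finset.sum_congr rfl (fun z _ => h1 z), Finset.sum_add_distrib, ← Finset.mul_sum,
      sum_mul_del u v (fun z => dR M a z)]
  have hsq : (∑ w, (x w + t * del u v w)^2)
      = (∑ w, (x w)^2) + t * (2 * (x v - x u)) + t^2 * 2 := by
    have h1 : ∀ w, (x w + t * del u v w)^2
        = (x w)^2 + (2*t) * (x w * del u v w) + t^2 * (del u v w * del u v w) := by
      intro w; ring
    rw [Finset.sum_congr rfl (fun w _ => h1 w)]
    rw [Finset.sum_add_distrib, Finset.sum_add_distrib, ← Finset.mul_sum, ← Finset.mul_sum,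
      sum_mul_del u v x, sum_mul_del u v (fun w => del u v w),
      del_self_u u v huv, del_self_v u v huv]
    ring
  have hbig : (∑ w, (x w + t * del u v w) * (∑ z, dR M w z * (x z + t * del u v z)))
      = (∑ w, x w * (∑ z, dR M w z * x z))
        + t * (2 * ((∑ z, dR M v z * x z) - (∑ z, dR M u z * x z)))
        + t^2 * (-(2 * dR M u v)) := by
    rw [Finset.sum_congr rfl (fun w _ => by rw [hrow w])]
    have h2 : ∀ w, (x w + t * del u v w) * ((∑ z, dR M w z * x z) + t * (dR M w v - dR M w u))
        = x w * (∑ z, dR M w z * x z)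
          + t * (x w * (dR M w v - dR M w u))
          + t * (del u v w * (∑ z, dR M w z * x z))
          + t^2 * (del u v w * (dR M w v - dR M w u)) := by
      intro w; ring
    rw [Finset.sum_congr rfl (fun w _ => h2 w)]
    rw [Finset.sum_add_distrib, Finset.sum_add_distrib, Finset.sum_add_distrib,
      ← Finset.mul_sum, ← Finset.mul_sum, ← Finset.mul_sum]
    have e1 : (∑ w, x w * (dR M w v - dR M w u))
        = (∑ z, dR M v z * x z) - (∑ z, dR M u z * x z) := by
      rw [Finset.sum_congr rfl (fun w _ => by rw [mul_sub]), Finset.sum_sub_distrib]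
      congr 1
      · exact Finset.sum_congr rfl (fun w _ => by rw [dR_symm, mul_comm])
      · exact Finset.sum_congr rfl (fun w _ => by rw [dR_symm, mul_comm])
    have e2 : (∑ w, del u v w * (∑ z, dR M w z * x z))
        = (∑ z, dR M v z * x z) - (∑ z, dR M u z * x z) := by
      have := sum_mul_del u v (fun w => ∑ z, dR M w z * x z)
      rw [← this]
      exact Finset.sum_congr rfl (fun w _ => by ring)
    have e3 : (∑ w, del u v w * (dR M w v - dR M w u)) = -(2 * dR M u v) := by
      have := sum_mul_del u v (fun w => dR M w v - dR M w u)
      have h4 : (∑ w, del u v w * (dR M w v - dR M w u))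
          = ∑ w, (fun w => dR M w v - dR M w u) w * del u v w :=
        Finset.sum_congr rfl (fun w _ => by ring)
      rw [h4, this]
      unfold dR
      rw [if_pos rfl, if_pos rfl, if_neg (show v ≠ u from Ne.symm huv), if_neg huv,
        M.symm v u]
      ring
    rw [e1, e2, e3]
    ring
  unfold RQ gQ
  rw [hsq, hbig]
  ring


lemma shift_mem (x : V → ℝ) (hx : x ∈ stdSimplex ℝ V) (u v : V) (huv : u ≠ v) (t : ℝ)
    (ht1 : -(x v) ≤ t) (ht2 : t ≤ x u) :
    (fun w => x w + t * del u v w) ∈ stdSimplex ℝ V := by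
  obtain ⟨hnn, hsum⟩ := hx
  constructor
  · intro w
    dsimp only
    by_cases hwv : w = v
    · have hd : del u v w = 1 := by simp [del, hwv, Ne.symm huv]
      rw [hd, mul_one, hwv]
      linarith
    · by_cases hwu : w = u
      · have hd : del u v w = -1 := by simp [del, hwu, huv, hwv]
        rw [hd, hwu]
        have := hnn u
        linarith
      · have hz : del u v w = 0 := by simp [del, hwv, hwu]
        rw [hz, mul_zero, add_zero]
        exact hnn w
  · rw [Finset.sum_add_distrib, hsum, ← Finset.mul_sum, sum_del]
    ring

lemma two_RQ (M : StdMultigraph V) (x : V → ℝ) :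
    ∑ w, x w * gQ M x w = 2 * RQ M x := by
  unfold gQ RQ
  have h : ∀ w, x w * (2 * x w + ∑ z, dR M w z * x z)
      = 2 * (x w)^2 + x w * ∑ z, dR M w z * x z := fun w => by ring
  rw [Finset.sum_congr rfl fun w _ => h w, Finset.sum_add_distrib, ← Finset.mul_sum]
  ring

lemma quad_zero {A B xu xv : ℝ} (hA : 0 ≤ A) (hxu : 0 < xu) (hxv : 0 < xv)
    (h : ∀ t : ℝ, -xv ≤ t → t ≤ xu → 0 ≤ t * B + t^2 * A) : B = 0 := by
  by_contra hB
  rcases lt_or_gt_of_ne hB with hneg | hpos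
  · set t := min xu ((-B) / (A + 1)) with ht
    have htpos : 0 < t := lt_min hxu (div_pos (by linarith) (by linarith))
    have h1 := h t (by linarith) (min_le_left _ _)
    have h2 : t ≤ (-B) / (A + 1) := min_le_right _ _
    have h3 : t * (A + 1) ≤ -B := by
      rw [← le_div_iff₀ (by linarith : (0:ℝ) < A + 1)]
      exact h2
    nlinarith [mul_le_mul_of_nonneg_left h3 htpos.le, mul_pos htpos htpos]
  · set m := min xv (B / (A + 1)) with hm
    have hmpos : 0 < m := lt_min hxv (div_pos (by linarith) (by linarith))
    have h1 := h (-m) (by simp only [neg_le_neg_iff]; exact min_le_left _ _) (by linarith)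
    have h2 : m ≤ B / (A + 1) := min_le_right _ _
    have h3 : m * (A + 1) ≤ B := by
      rw [← le_div_iff₀ (by linarith : (0:ℝ) < A + 1)]
      exact h2
    nlinarith [mul_le_mul_of_nonneg_left h3 hmpos.le, mul_pos hmpos hmpos]

noncomputable def suppF (x : V → ℝ) : Finset V := Finset.univ.filter (fun v => x v ≠ 0)

lemma continuous_RQ (M : StdMultigraph V) : Continuous (RQ M) := by
  unfold RQ
  apply Continuous.add
  · exact continuous_finset_sum _ fun v _ => (continuous_apply v).pow 2
  · apply Continuous.mul continuous_const
    exact continuous_finset_sum _ fun w _ => (continuous_apply w).mul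
      (continuous_finset_sum _ fun z _ => continuous_const.mul (continuous_apply z))

lemma exists_min_minsupp (M : StdMultigraph V) [Nonempty V] :
    ∃ x ∈ stdSimplex ℝ V, IsMinOn (RQ M) (stdSimplex ℝ V) x ∧
      ∀ y ∈ stdSimplex ℝ V, IsMinOn (RQ M) (stdSimplex ℝ V) y →
        (suppF x).card ≤ (suppF y).card := by
  classical
  have hne : (stdSimplex ℝ V).Nonempty := by
    refine ⟨fun w => if w = Classical.arbitrary V then 1 else 0, ?_, ?_⟩
    · intro w; dsimp only; split <;> norm_num
    · simp
  obtain ⟨x₁, hx₁, hmin₁⟩ := (isCompact_stdSimplex ℝ V).exists_isMinOn hne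
    (continuous_RQ M).continuousOn
  set P : ℕ → Prop := fun m => ∃ x, (x ∈ stdSimplex ℝ V ∧
      IsMinOn (RQ M) (stdSimplex ℝ V) x) ∧ (suppF x).card = m with hPdef
  have hP : ∃ m, P m := ⟨_, x₁, ⟨hx₁, hmin₁⟩, rfl⟩
  obtain ⟨x₀, ⟨hx₀, hmin₀⟩, hcard₀⟩ := Nat.find_spec hP
  refine ⟨x₀, hx₀, hmin₀, fun y hy hminy => ?_⟩
  have hPy : P (suppF y).card := ⟨y, ⟨hy, hminy⟩, rfl⟩
  rw [hcard₀]
  exact Nat.find_min' hP hPy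

lemma stationary (M : StdMultigraph V) {x : V → ℝ} (hx : x ∈ stdSimplex ℝ V)
    (hmin : IsMinOn (RQ M) (stdSimplex ℝ V) x) {u v : V} (huv : u ≠ v)
    (hu : 0 < x u) (hv : 0 < x v) : gQ M x v = gQ M x u := by
  have key : ∀ t : ℝ, -(x v) ≤ t → t ≤ x u →
      0 ≤ t * (gQ M x v - gQ M x u) + t^2 * (2 - dR M u v) := by
    intro t h1 h2
    have hmem := shift_mem x hx u v huv t h1 h2
    have hle := (isMinOn_iff.mp hmin) _ hmem
    rw [RQ_shift M x u v huv t] at hle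
    linarith
  have hz := quad_zero (by linarith [dR_le_two M u v]) hu hv key
  linarith

lemma no_mu_zero (M : StdMultigraph V) {x : V → ℝ} (hx : x ∈ stdSimplex ℝ V)
    (hmin : IsMinOn (RQ M) (stdSimplex ℝ V) x)
    (hminsupp : ∀ y ∈ stdSimplex ℝ V, IsMinOn (RQ M) (stdSimplex ℝ V) y →
        (suppF x).card ≤ (suppF y).card)
    {u v : V} (huv : u ≠ v) (hu : 0 < x u) (hv : 0 < x v) : M.μ u v ≠ 0 := by
  intro h0
  have hdR : dR M u v = 2 := by
    unfold dR; rw [if_neg huv, h0]; simp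
  have hB : gQ M x v - gQ M x u = 0 := by
    rw [stationary M hx hmin huv hu hv]; ring
  set y : V → ℝ := fun w => x w + x u * del u v w with hydef
  have hyu : y u = 0 := by
    have hd : del u v u = -1 := del_self_u u v huv
    simp only [hydef, hd]
    ring
  have hyv : y v = x v + x u := by
    have hd : del u v v = 1 := del_self_v u v huv
    simp only [hydef, hd]
    ring
  have hyw : ∀ w, w ≠ u → w ≠ v → y w = x w := by
    intro w hwu hwv
    have hz : del u v w = 0 := by simp [del, hwu, hwv]
    simp only [hydef, hz]
    ring
  have hymem : y ∈ stdSimplex ℝ V := shift_mem x hx u v huv (x u) (by linarith) le_rfl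
  have hyRQ : RQ M y = RQ M x := by
    rw [hydef, RQ_shift M x u v huv (x u), hdR, hB]; ring
  have hymin : IsMinOn (RQ M) (stdSimplex ℝ V) y := by
    rw [isMinOn_iff]
    intro z hz
    rw [hyRQ]
    exact (isMinOn_iff.mp hmin) z hz
  have hsupp : suppF y = (suppF x).erase u := by
    ext w
    simp only [suppF, Finset.mem_filter, Finset.mem_univ, true_and, Finset.mem_erase]
    by_cases hwu : w = u
    · subst hwu
      simp [hyu]
    · by_cases hwv : w = v
      · subst hwv
        rw [hyv]
        constructor
        · intro _; exact ⟨hwu, ne_of_gt hv⟩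
        · intro _; positivity
      · rw [hyw w hwu hwv]
        exact ⟨fun h => ⟨hwu, h⟩, fun h => h.2⟩
  have hcard : (suppF y).card < (suppF x).card := by
    rw [hsupp]
    exact Finset.card_erase_lt_of_mem
      (by simp only [suppF, Finset.mem_filter, Finset.mem_univ, true_and]; exact ne_of_gt hu)
  exact absurd (hminsupp _ hymem hymin) (not_le.mpr hcard)


/-- The key counting lemma: at a stationary point of `RQ` whose support contains no
`μ = 0` pair, there is a large "dissociation" set `D`. -/
lemma count (M : StdMultigraph V) {x : V → ℝ} (hx : x ∈ stdSimplex ℝ V)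
    (hstat : ∀ u ∈ suppF x, ∀ v ∈ suppF x, gQ M x u = gQ M x v)
    (hmu : ∀ u ∈ suppF x, ∀ v ∈ suppF x, u ≠ v → M.μ u v ≠ 0) :
    ∃ D : Finset V, D ⊆ suppF x ∧
      (∀ v ∈ D, (D.filter (fun u => M.μ u v = 1)).card ≤ 1) ∧
      (2:ℝ) ≤ (D.card : ℝ) * (2 * RQ M x) := by
  classical
  obtain ⟨hnn, hsum⟩ := hx
  set S : Finset V := suppF x with hSdef
  have hS0 : ∀ v, v ∉ S → x v = 0 := by
    intro v hv
    by_contra h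
    exact hv (by simp [hSdef, suppF, h])
  have hSpos : ∀ v ∈ S, 0 < x v := by
    intro v hv
    simp only [hSdef, suppF, Finset.mem_filter] at hv
    exact lt_of_le_of_ne (hnn v) (Ne.symm hv.2)
  have hsumS : ∑ v ∈ S, x v = 1 := by
    rw [← hsum]
    exact Finset.sum_subset (Finset.subset_univ S) (fun v _ hv => hS0 v hv)
  have hSne : S.Nonempty := by
    by_contra h
    rw [Finset.not_nonempty_iff_eq_empty] at h
    rw [h, Finset.sum_empty] at hsumS
    norm_num at hsumS
  obtain ⟨w₀, hw₀⟩ := hSne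
  set lam : ℝ := gQ M x w₀ with hlamdef
  have hlam : ∀ w ∈ S, gQ M x w = lam := fun w hw => hstat w hw w₀ hw₀
  -- lam = 2 RQ
  have hlam2 : lam = 2 * RQ M x := by
    have h1 : ∑ w, x w * gQ M x w = 2 * RQ M x := two_RQ M x
    have h2 : ∑ w, x w * gQ M x w = ∑ w ∈ S, x w * gQ M x w :=
      (Finset.sum_subset (Finset.subset_univ S)
        (fun v _ hv => by rw [hS0 v hv, zero_mul])).symm
    have h3 : ∑ w ∈ S, x w * gQ M x w = ∑ w ∈ S, x w * lam :=
      Finset.sum_congr rfl (fun w hw => by rw [hlam w hw])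
    have h4 : ∑ w ∈ S, x w * lam = lam := by
      rw [← Finset.sum_mul, hsumS, one_mul]
    rw [← h4, ← h3, ← h2, h1]
  -- gQ on support via indicator
  have hgQ : ∀ v ∈ S, gQ M x v = 2 * x v + ∑ z, (if M.μ v z = 1 then x z else 0) := by
    intro v hv
    unfold gQ
    congr 1
    apply Finset.sum_congr rfl
    intro z _
    by_cases hz : x z = 0
    · rw [hz, mul_zero]
      simp
    · have hzS : z ∈ S := by simp [hSdef, suppF, hz]
      by_cases hvz : v = z
      · subst hvz
        have : M.μ v v = 0 := M.loopless v
        rw [if_neg (by omega), dR]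
        simp
      · have h1 : M.μ v z ≠ 0 := hmu v hv z hzS hvz
        have h2 : M.μ v z ≤ 2 := M.le_two v z
        unfold dR
        rw [if_neg hvz]
        have h3 : M.μ v z = 1 ∨ M.μ v z = 2 := by omega
        rcases h3 with h3 | h3 <;> rw [h3] <;> norm_num
  -- the dissociation family
  set Diss : Finset V → Prop :=
    fun D => ∀ v ∈ D, (D.filter (fun u => M.μ u v = 1)).card ≤ 1 with hDissdef
  set F : Finset (Finset V) := S.powerset.filter Diss with hFdef
  have hFne : F.Nonempty := by
    refine ⟨∅, ?_⟩
    simp only [hFdef, Finset.mem_filter, Finset.mem_powerset]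
    exact ⟨Finset.empty_subset S, fun v hv => absurd hv (Finset.notMem_empty v)⟩
  obtain ⟨D, hDF, hDmax⟩ := F.exists_max_image
    (fun D => 2 * (D.card : ℝ) + ∑ v ∈ D, x v) hFne
  have hDS : D ⊆ S := Finset.mem_powerset.mp (Finset.mem_filter.mp hDF).1
  have hDdiss : Diss D := (Finset.mem_filter.mp hDF).2
  refine ⟨D, hDS, hDdiss, ?_⟩
  -- weight bounds
  have hwnn : ∀ D' : Finset V, (0:ℝ) ≤ ∑ v ∈ D', x v :=
    fun D' => Finset.sum_nonneg (fun v _ => hnn v)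
  have hwle : ∀ D' : Finset V, D' ⊆ S → (∑ v ∈ D', x v) ≤ 1 := by
    intro D' hsub
    rw [← hsumS]
    exact Finset.sum_le_sum_of_subset_of_nonneg hsub (fun v _ _ => hnn v)
  have hmaxcard : ∀ D' : Finset V, D' ⊆ S → Diss D' → D'.card ≤ D.card := by
    intro D' hsub hdiss
    by_contra h
    have h1 : D.card + 1 ≤ D'.card := by omega
    have h2 := hDmax D' (Finset.mem_filter.mpr ⟨Finset.mem_powerset.mpr hsub, hdiss⟩)
    have h3 : (D.card:ℝ) + 1 ≤ (D'.card:ℝ) := by exact_mod_cast h1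
    have h4 := hwnn D'
    have h5 := hwle D hDS
    linarith
  have hmaxw : ∀ D' : Finset V, D' ⊆ S → Diss D' → D'.card = D.card →
      (∑ v ∈ D', x v) ≤ ∑ v ∈ D, x v := by
    intro D' hsub hdiss hcard
    have h2 := hDmax D' (Finset.mem_filter.mpr ⟨Finset.mem_powerset.mpr hsub, hdiss⟩)
    rw [hcard] at h2
    linarith
  -- neighbor count
  set E : V → ℕ := fun z => (D.filter (fun u => M.μ u z = 1)).card with hEdef
  have huniq : ∀ z, E z ≤ 1 → ∀ w₁ ∈ D, M.μ w₁ z = 1 → ∀ w₂ ∈ D, M.μ w₂ z = 1 → w₁ = w₂ := by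
    intro z hz w₁ h₁ hm₁ w₂ h₂ hm₂
    exact Finset.card_le_one.mp hz w₁ (Finset.mem_filter.mpr ⟨h₁, hm₁⟩)
      w₂ (Finset.mem_filter.mpr ⟨h₂, hm₂⟩)
  have hED : ∀ v ∈ D, E v ≤ 1 := fun v hv => hDdiss v hv
  -- pendant predicate
  set Pend : V → Prop := fun z => E z = 1 ∧ ∃ u ∈ D, M.μ u z = 1 ∧ E u = 1 with hPenddef
  -- blocking analysis
  have hblock : ∀ z ∈ S, z ∉ D → (2 ≤ E z ∨ Pend z) := by
    intro z hzS hzD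
    by_cases h2 : 2 ≤ E z
    · exact Or.inl h2
    right
    have hzz : ¬ (M.μ z z = 1) := by rw [M.loopless]; omega
    rcases Nat.lt_or_ge (E z) 1 with h0 | h1
    · exfalso
      have hE0 : E z = 0 := by omega
      have hfe : D.filter (fun u => M.μ u z = 1) = ∅ := Finset.card_eq_zero.mp hE0
      have hno : ∀ w ∈ D, ¬ (M.μ w z = 1) := by
        intro w hw hmw
        have hmem : w ∈ D.filter (fun u => M.μ u z = 1) := Finset.mem_filter.mpr ⟨hw, hmw⟩
        rw [hfe] at hmem
        exact absurd hmem (Finset.notMem_empty w)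
      have hins : Diss (insert z D) := by
        intro v hv
        rcases Finset.mem_insert.mp hv with rfl | hvD
        · rw [Finset.filter_insert, if_neg hzz, hfe]
          simp
        · rw [Finset.filter_insert,
            if_neg (fun hzv => hno v hvD (by rw [M.symm]; exact hzv))]
          exact hDdiss v hvD
      have hcard := hmaxcard (insert z D) (Finset.insert_subset hzS hDS) hins
      rw [Finset.card_insert_of_notMem hzD] at hcard
      omega
    · have hE1 : E z = 1 := by omega
      obtain ⟨u, hu⟩ := Finset.card_eq_one.mp hE1
      have huD : u ∈ D ∧ M.μ u z = 1 := by
        have hmem : u ∈ D.filter (fun u => M.μ u z = 1) := by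
          rw [hu]; exact Finset.mem_singleton_self u
        exact Finset.mem_filter.mp hmem
      refine ⟨hE1, u, huD.1, huD.2, ?_⟩
      by_contra hEu
      have hEu0 : E u = 0 := by have := hED u huD.1; omega
      have hfeu : D.filter (fun w => M.μ w u = 1) = ∅ := Finset.card_eq_zero.mp hEu0
      have hins : Diss (insert z D) := by
        intro v hv
        rcases Finset.mem_insert.mp hv with rfl | hvD
        · rw [Finset.filter_insert, if_neg hzz, hu]
          simp
        · by_cases hvu : v = u
          · subst hvu
            rw [Finset.filter_insert,
              if_pos (show M.μ z v = 1 by rw [M.symm]; exact huD.2), hfeu]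
            simp
          · rw [Finset.filter_insert, if_neg ?_]
            · exact hDdiss v hvD
            · intro hzv
              have hvz : M.μ v z = 1 := by rw [M.symm]; exact hzv
              have hmem : v ∈ D.filter (fun u => M.μ u z = 1) :=
                Finset.mem_filter.mpr ⟨hvD, hvz⟩
              rw [hu] at hmem
              exact hvu (Finset.mem_singleton.mp hmem)
      have hcard := hmaxcard (insert z D) (Finset.insert_subset hzS hDS) hins
      rw [Finset.card_insert_of_notMem hzD] at hcard
      omega
  -- pendant uniqueness: two distinct pendants cannot share the same neighbor
  have hpend_uniq : ∀ z₁ ∈ S, ∀ z₂ ∈ S, z₁ ∉ D → z₂ ∉ D → E z₁ = 1 → E z₂ = 1 →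
      ∀ u ∈ D, M.μ u z₁ = 1 → M.μ u z₂ = 1 → z₁ = z₂ := by
    intro z₁ hz₁S z₂ hz₂S hz₁D hz₂D hE₁ hE₂ u huD hm₁ hm₂
    by_contra hne
    have hz1nbr : ∀ w ∈ D, M.μ w z₁ = 1 → w = u :=
      fun w hw hmw => huniq z₁ (le_of_eq hE₁) w hw hmw u huD hm₁
    have hz2nbr : ∀ w ∈ D, M.μ w z₂ = 1 → w = u :=
      fun w hw hmw => huniq z₂ (le_of_eq hE₂) w hw hmw u huD hm₂
    set D' : Finset V := insert z₁ (insert z₂ (D.erase u)) with hD'def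
    have hD'sub : D' ⊆ S := by
      rw [hD'def]
      exact Finset.insert_subset hz₁S
        (Finset.insert_subset hz₂S ((Finset.erase_subset u D).trans hDS))
    have hmemD' : ∀ a, a ∈ D' ↔ (a = z₁ ∨ a = z₂ ∨ (a ∈ D ∧ a ≠ u)) := by
      intro a
      rw [hD'def]
      simp only [Finset.mem_insert, Finset.mem_erase]
      tauto
    have hD'diss : Diss D' := by
      intro v hv
      rw [Finset.card_le_one]
      intro a ha b hb
      rw [Finset.mem_filter] at ha hb
      obtain ⟨haD, hma⟩ := ha
      obtain ⟨hbD, hmb⟩ := hb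
      rcases (hmemD' v).mp hv with rfl | rfl | ⟨hvD, hvu⟩
      · -- v = z₁ : only possible neighbor within D' is z₂
        have key : ∀ c, c ∈ D' → M.μ c v = 1 → c = z₂ := by
          intro c hc hmc
          rcases (hmemD' c).mp hc with rfl | rfl | ⟨hcD, hcu⟩
          · exact absurd hmc (by rw [M.loopless]; exact zero_ne_one)
          · rfl
          · exact absurd (hz1nbr c hcD hmc) hcu
        rw [key a haD hma, key b hbD hmb]
      · have key : ∀ c, c ∈ D' → M.μ c v = 1 → c = z₁ := by
          intro c hc hmc
          rcases (hmemD' c).mp hc with rfl | rfl | ⟨hcD, hcu⟩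
          · rfl
          · exact absurd hmc (by rw [M.loopless]; exact zero_ne_one)
          · exact absurd (hz2nbr c hcD hmc) hcu
        rw [key a haD hma, key b hbD hmb]
      · -- v ∈ D, v ≠ u
        have key : ∀ c, c ∈ D' → M.μ c v = 1 → (c ∈ D ∧ c ≠ u) := by
          intro c hc hmc
          rcases (hmemD' c).mp hc with rfl | rfl | hcD
          · exfalso
            have : M.μ v c = 1 := by rw [M.symm]; exact hmc
            exact hvu (hz1nbr v hvD this)
          · exfalso
            have : M.μ v c = 1 := by rw [M.symm]; exact hmc
            exact hvu (hz2nbr v hvD this)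
          · exact hcD
        obtain ⟨haD2, -⟩ := key a haD hma
        obtain ⟨hbD2, -⟩ := key b hbD hmb
        exact huniq v (hED v hvD) a haD2 hma b hbD2 hmb
    have hz₂ne : z₂ ∉ D.erase u := fun h => hz₂D (Finset.mem_of_mem_erase h)
    have hz₁ne : z₁ ∉ insert z₂ (D.erase u) := by
      rw [Finset.mem_insert]
      rintro (rfl | h)
      · exact hne rfl
      · exact hz₁D (Finset.mem_of_mem_erase h)
    have hcard' : D'.card = D.card + 1 := by
      rw [hD'def, Finset.card_insert_of_notMem hz₁ne, Finset.card_insert_of_notMem hz₂ne,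
        Finset.card_erase_of_mem huD]
      have : 1 ≤ D.card := Finset.card_pos.mpr ⟨u, huD⟩
      omega
    have := hmaxcard D' hD'sub hD'diss
    omega
  -- swap bound
  have hswap : ∀ z ∈ S, z ∉ D → E z = 1 → ∀ u ∈ D, M.μ u z = 1 →
      ∀ u' ∈ D, M.μ u' u = 1 → x z ≤ x u' := by
    intro z hzS hzD hEz u huD hmuz u' hu'D hmu'
    have hne_uu' : u ≠ u' := by
      intro h
      rw [h, M.loopless] at hmu'
      omega
    have hznbr : ∀ w ∈ D, M.μ w z = 1 → w = u :=
      fun w hw hmw => huniq z (le_of_eq hEz) w hw hmw u huD hmuz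
    have hunbr : ∀ w ∈ D, M.μ w u = 1 → w = u' :=
      fun w hw hmw => huniq u (hED u huD) w hw hmw u' hu'D hmu'
    set D'' : Finset V := insert z (D.erase u') with hD''def
    have hmemD'' : ∀ a, a ∈ D'' ↔ (a = z ∨ (a ∈ D ∧ a ≠ u')) := by
      intro a
      rw [hD''def]
      simp only [Finset.mem_insert, Finset.mem_erase]
      tauto
    have hD''sub : D'' ⊆ S := by
      rw [hD''def]
      exact Finset.insert_subset hzS ((Finset.erase_subset u' D).trans hDS)
    have hD''diss : Diss D'' := by
      intro v hv
      rw [Finset.card_le_one]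
      intro a ha b hb
      rw [Finset.mem_filter] at ha hb
      obtain ⟨haD, hma⟩ := ha
      obtain ⟨hbD, hmb⟩ := hb
      rcases (hmemD'' v).mp hv with rfl | ⟨hvD, hvu'⟩
      · -- v = z: unique neighbor is u (and u ≠ u')
        have key : ∀ c, c ∈ D'' → M.μ c v = 1 → c = u := by
          intro c hc hmc
          rcases (hmemD'' c).mp hc with rfl | ⟨hcD, hcu'⟩
          · exact absurd hmc (by rw [M.loopless]; exact zero_ne_one)
          · exact hznbr c hcD hmc
        rw [key a haD hma, key b hbD hmb]
      · by_cases hvu : v = u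
        · subst hvu
          have key : ∀ c, c ∈ D'' → M.μ c v = 1 → c = z := by
            intro c hc hmc
            rcases (hmemD'' c).mp hc with rfl | ⟨hcD, hcu'⟩
            · rfl
            · exact absurd (hunbr c hcD hmc) hcu'
          rw [key a haD hma, key b hbD hmb]
        · have key : ∀ c, c ∈ D'' → M.μ c v = 1 → c ∈ D := by
            intro c hc hmc
            rcases (hmemD'' c).mp hc with rfl | ⟨hcD, hcu'⟩
            · exfalso
              have : M.μ v c = 1 := by rw [M.symm]; exact hmc
              exact hvu (hznbr v hvD this)
            · exact hcD
          exact huniq v (hED v hvD) a (key a haD hma) hma b (key b hbD hmb) hmb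
    have hznotin : z ∉ D.erase u' := fun h => hzD (Finset.mem_of_mem_erase h)
    have hcard'' : D''.card = D.card := by
      rw [hD''def, Finset.card_insert_of_notMem hznotin, Finset.card_erase_of_mem hu'D]
      have : 1 ≤ D.card := Finset.card_pos.mpr ⟨u', hu'D⟩
      omega
    have hwle'' := hmaxw D'' hD''sub hD''diss hcard''
    have hsum'' : ∑ v ∈ D'', x v = x z + (∑ v ∈ D, x v - x u') := by
      rw [hD''def, Finset.sum_insert hznotin, Finset.sum_erase_eq_sub hu'D]
    rw [hsum''] at hwle''
    linarith
  -- choice of neighbor and partner functions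
  have hnb' : ∀ z : V, ∃ u : V, (z ∈ S ∧ z ∉ D ∧ Pend z) → (u ∈ D ∧ M.μ u z = 1 ∧ E u = 1) := by
    intro z
    by_cases hz : z ∈ S ∧ z ∉ D ∧ Pend z
    · have hpz : E z = 1 ∧ ∃ u ∈ D, M.μ u z = 1 ∧ E u = 1 := hz.2.2
      obtain ⟨-, u, huD, hm1, hEu⟩ := hpz
      exact ⟨u, fun _ => ⟨huD, hm1, hEu⟩⟩
    · exact ⟨w₀, fun h => absurd h hz⟩
  choose nb hnbspec using hnb'
  have hpt' : ∀ u : V, ∃ w : V, (u ∈ D ∧ E u = 1) → (w ∈ D ∧ M.μ w u = 1 ∧ E w = 1) := by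
    intro u
    by_cases hu : u ∈ D ∧ E u = 1
    · obtain ⟨w, hw⟩ := Finset.card_eq_one.mp hu.2
      have hwmem : w ∈ D.filter (fun v => M.μ v u = 1) := by
        rw [hw]; exact Finset.mem_singleton_self w
      rw [Finset.mem_filter] at hwmem
      refine ⟨w, fun _ => ⟨hwmem.1, hwmem.2, ?_⟩⟩
      have h1 : u ∈ D.filter (fun v => M.μ v w = 1) :=
        Finset.mem_filter.mpr ⟨hu.1, by rw [M.symm]; exact hwmem.2⟩
      have h2 : 1 ≤ E w := Finset.card_pos.mpr ⟨u, h1⟩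
      have h3 := hED w hwmem.1
      omega
    · exact ⟨w₀, fun h => absurd h hu⟩
  choose pt hptspec using hpt'
  set Dm : Finset V := D.filter (fun v => E v = 1) with hDmdef
  set P : Finset V := (S \ D).filter Pend with hP2def
  have hPfact : ∀ z ∈ P, z ∈ S ∧ z ∉ D ∧ Pend z := by
    intro z hz
    rw [hP2def, Finset.mem_filter, Finset.mem_sdiff] at hz
    exact ⟨hz.1.1, hz.1.2, hz.2⟩
  have hnbz : ∀ z ∈ P, nb z ∈ D ∧ M.μ (nb z) z = 1 ∧ E (nb z) = 1 :=
    fun z hz => hnbspec z (hPfact z hz)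
  have hptz : ∀ u, u ∈ D → E u = 1 → pt u ∈ D ∧ M.μ (pt u) u = 1 ∧ E (pt u) = 1 :=
    fun u h1 h2 => hptspec u ⟨h1, h2⟩
  have hptpt : ∀ u, u ∈ D → E u = 1 → pt (pt u) = u := by
    intro u huD hEu
    obtain ⟨h1, h2, h3⟩ := hptz u huD hEu
    obtain ⟨g1, g2, g3⟩ := hptz (pt u) h1 h3
    exact huniq (pt u) (le_of_eq h3) (pt (pt u)) g1 g2 u huD (by rw [M.symm]; exact h2)
  have hswapP : ∀ z ∈ P, x z ≤ x (pt (nb z)) := by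
    intro z hz
    obtain ⟨hzS, hzD, hpz⟩ := hPfact z hz
    obtain ⟨h1, h2, h3⟩ := hnbz z hz
    obtain ⟨g1, g2, g3⟩ := hptz (nb z) h1 h3
    have hpz' : E z = 1 ∧ ∃ u ∈ D, M.μ u z = 1 ∧ E u = 1 := hpz
    exact hswap z hzS hzD hpz'.1 (nb z) h1 h2 (pt (nb z)) g1 g2
  have hinj : ∀ z₁ ∈ P, ∀ z₂ ∈ P, pt (nb z₁) = pt (nb z₂) → z₁ = z₂ := by
    intro z₁ h₁ z₂ h₂ heq
    obtain ⟨h1S, h1D, hp1⟩ := hPfact z₁ h₁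
    obtain ⟨h2S, h2D, hp2⟩ := hPfact z₂ h₂
    have hp1' : E z₁ = 1 ∧ ∃ u ∈ D, M.μ u z₁ = 1 ∧ E u = 1 := hp1
    have hp2' : E z₂ = 1 ∧ ∃ u ∈ D, M.μ u z₂ = 1 ∧ E u = 1 := hp2
    obtain ⟨a1, a2, a3⟩ := hnbz z₁ h₁
    obtain ⟨b1, b2, b3⟩ := hnbz z₂ h₂
    have hnb_eq : nb z₁ = nb z₂ := by
      have e1 : pt (pt (nb z₁)) = nb z₁ := hptpt _ a1 a3
      have e2 : pt (pt (nb z₂)) = nb z₂ := hptpt _ b1 b3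
      rw [← e1, ← e2, heq]
    exact hpend_uniq z₁ h1S z₂ h2S h1D h2D hp1'.1 hp2'.1 (nb z₁) a1 a2
      (by rw [hnb_eq]; exact b2)
  have hPDm : ∑ z ∈ P, x z ≤ ∑ w ∈ Dm, x w := by
    have step1 : ∑ z ∈ P, x z ≤ ∑ z ∈ P, x (pt (nb z)) := Finset.sum_le_sum hswapP
    have step2 : ∑ w ∈ P.image (fun z => pt (nb z)), x w = ∑ z ∈ P, x (pt (nb z)) :=
      Finset.sum_image (fun z₁ h₁ z₂ h₂ h => hinj z₁ h₁ z₂ h₂ h)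
    have step3 : P.image (fun z => pt (nb z)) ⊆ Dm := by
      intro w hw
      rw [Finset.mem_image] at hw
      obtain ⟨z, hz, rfl⟩ := hw
      obtain ⟨a1, a2, a3⟩ := hnbz z hz
      obtain ⟨g1, g2, g3⟩ := hptz (nb z) a1 a3
      rw [hDmdef, Finset.mem_filter]
      exact ⟨g1, g3⟩
    have step4 : ∑ w ∈ P.image (fun z => pt (nb z)), x w ≤ ∑ w ∈ Dm, x w :=
      Finset.sum_le_sum_of_subset_of_nonneg step3 (fun w _ _ => hnn w)
    linarith
  -- the main identity and inequalities
  have hmain : lam * (D.card : ℝ) = 2 * (∑ v ∈ D, x v) + ∑ z, x z * (E z : ℝ) := by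
    have h1 : ∑ v ∈ D, gQ M x v = lam * (D.card : ℝ) := by
      rw [Finset.sum_congr rfl (fun v hv => hlam v (hDS hv)), Finset.sum_const,
        nsmul_eq_mul]
      ring
    have h2 : ∑ v ∈ D, gQ M x v
        = 2 * (∑ v ∈ D, x v) + ∑ v ∈ D, ∑ z, (if M.μ v z = 1 then x z else 0) := by
      rw [Finset.sum_congr rfl (fun v hv => hgQ v (hDS hv)), Finset.sum_add_distrib,
        ← Finset.mul_sum]
    have h3 : ∑ v ∈ D, ∑ z, (if M.μ v z = 1 then x z else 0) = ∑ z, x z * (E z:ℝ) := by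
      rw [Finset.sum_comm]
      apply Finset.sum_congr rfl
      intro z _
      rw [← Finset.sum_filter, Finset.sum_const, nsmul_eq_mul]
      simp only [hEdef]
      ring
    rw [← h1, h2, h3]
  have hsplit : (∑ z, x z * (E z:ℝ))
      = ∑ z ∈ S \ D, x z * (E z:ℝ) + ∑ z ∈ D, x z * (E z:ℝ) := by
    have e0 : ∑ z, x z * (E z:ℝ) = ∑ z ∈ S, x z * (E z:ℝ) :=
      (Finset.sum_subset (Finset.subset_univ S)
        (fun z _ hz => by rw [hS0 z hz, zero_mul])).symm
    rw [e0, ← Finset.sum_sdiff hDS]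
  have hpart1 : ∑ z ∈ D, x z * (E z:ℝ) = ∑ z ∈ Dm, x z := by
    rw [hDmdef, Finset.sum_filter]
    apply Finset.sum_congr rfl
    intro z hz
    have h01 : E z = 0 ∨ E z = 1 := by have := hED z hz; omega
    rcases h01 with h | h <;> rw [h] <;> simp
  have hpart2 : ∀ z ∈ S \ D, 2 * x z - (if Pend z then x z else 0) ≤ x z * (E z:ℝ) := by
    intro z hz
    rw [Finset.mem_sdiff] at hz
    have hxz := hnn z
    rcases hblock z hz.1 hz.2 with h2 | hp
    · have hc : (2:ℝ) ≤ (E z:ℝ) := by exact_mod_cast h2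
      have h2x : 2 * x z ≤ x z * (E z:ℝ) := by nlinarith
      split
      · linarith
      · linarith
    · have hp' : E z = 1 ∧ ∃ u ∈ D, M.μ u z = 1 ∧ E u = 1 := hp
      rw [if_pos hp, hp'.1]
      push_cast
      linarith
  have hsum2 : 2 * (∑ z ∈ S \ D, x z) - (∑ z ∈ P, x z) ≤ ∑ z ∈ S \ D, x z * (E z:ℝ) := by
    have e1 : ∑ z ∈ S \ D, (2 * x z - (if Pend z then x z else 0))
        = 2 * (∑ z ∈ S \ D, x z) - ∑ z ∈ P, x z := by
      rw [Finset.sum_sub_distrib, ← Finset.mul_sum, hP2def, Finset.sum_filter]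
    rw [← e1]
    exact Finset.sum_le_sum hpart2
  have hDsum : ∑ z ∈ S \ D, x z + ∑ v ∈ D, x v = 1 := by
    rw [← hsumS, ← Finset.sum_sdiff hDS]
  have hfinal : (2:ℝ) ≤ lam * (D.card : ℝ) := by
    rw [hmain, hsplit, hpart1]
    linarith [hPDm, hsum2, hDsum]
  rw [hlam2] at hfinal
  exact le_of_le_of_eq hfinal (mul_comm _ _)


lemma extract (M : StdMultigraph V) (s r : ℕ) (hs : 2*r + 1 ≤ s) (D : Finset V)
    (hcard : 2*s ≤ D.card + 2*r + 1)
    (hdiss : ∀ v ∈ D, (D.filter (fun u => M.μ u v = 1)).card ≤ 1)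
    (hmu : ∀ u ∈ D, ∀ v ∈ D, u ≠ v → M.μ u v = 1 ∨ M.μ u v = 2) :
    ∃ q : ℕ, q ≤ r ∧ HasKMinusMatching M s q := by
  classical
  set f : V → ℕ := fun v => ((Fintype.equivFin V) v : ℕ) with hf
  have hfinj : Function.Injective f := by
    intro a b h
    exact (Fintype.equivFin V).injective (Fin.val_injective h)
  have hsymm1 : ∀ u v : V, M.μ u v = 1 → M.μ v u = 1 := by
    intro u v h; rw [M.symm]; exact h
  have hloop : ∀ v : V, ¬ M.μ v v = 1 := by
    intro v h; rw [M.loopless] at h; exact zero_ne_one h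
  have huniq : ∀ v ∈ D, ∀ w₁ ∈ D, M.μ w₁ v = 1 → ∀ w₂ ∈ D, M.μ w₂ v = 1 → w₁ = w₂ := by
    intro v hv w₁ h₁ hm₁ w₂ h₂ hm₂
    exact Finset.card_le_one.mp (hdiss v hv) w₁ (Finset.mem_filter.mpr ⟨h₁, hm₁⟩)
      w₂ (Finset.mem_filter.mpr ⟨h₂, hm₂⟩)
  set pr : Finset (V × V) := (D ×ˢ D).filter (fun p => M.μ p.1 p.2 = 1 ∧ f p.1 < f p.2)
    with hpr
  have hprmem : ∀ p ∈ pr, p.1 ∈ D ∧ p.2 ∈ D ∧ M.μ p.1 p.2 = 1 ∧ f p.1 < f p.2 := by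
    intro p hp
    rw [hpr, Finset.mem_filter, Finset.mem_product] at hp
    exact ⟨hp.1.1, hp.1.2, hp.2.1, hp.2.2⟩
  have hdisj : ∀ p ∈ pr, ∀ p' ∈ pr, p ≠ p' →
      p.1 ≠ p'.1 ∧ p.1 ≠ p'.2 ∧ p.2 ≠ p'.1 ∧ p.2 ≠ p'.2 := by
    intro p hp p' hp' hne
    obtain ⟨h1, h2, h3, h4⟩ := hprmem p hp
    obtain ⟨g1, g2, g3, g4⟩ := hprmem p' hp'
    refine ⟨?_, ?_, ?_, ?_⟩
    · intro heq
      have e2 : p.2 = p'.2 := by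
        apply huniq p.1 h1 p.2 h2 (hsymm1 _ _ h3) p'.2 g2
        apply hsymm1
        rw [← heq] at g3
        exact g3
      exact hne (Prod.ext heq e2)
    · intro heq
      have e2 : p.2 = p'.1 := by
        apply huniq p.1 h1 p.2 h2 (hsymm1 _ _ h3) p'.1 g1
        rw [← heq] at g3
        exact g3
      have o1 : f p.2 = f p'.1 := congrArg f e2
      have o2 : f p.1 = f p'.2 := congrArg f heq
      omega
    · intro heq
      have e2 : p.1 = p'.2 := by
        apply huniq p.2 h2 p.1 h1 h3 p'.2 g2
        apply hsymm1
        rw [heq]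
        exact g3
      have o1 : f p.2 = f p'.1 := congrArg f heq
      have o2 : f p.1 = f p'.2 := congrArg f e2
      omega
    · intro heq
      have e2 : p.1 = p'.1 := by
        apply huniq p.2 h2 p.1 h1 h3 p'.1 g1
        rw [heq]
        exact g3
      exact hne (Prod.ext e2 heq)
  have hfstinj : ∀ p ∈ pr, ∀ p' ∈ pr, p.1 = p'.1 → p = p' := by
    intro p hp p' hp' h
    by_contra hne
    exact (hdisj p hp p' hp' hne).1 h
  have hsndinj : ∀ p ∈ pr, ∀ p' ∈ pr, p.2 = p'.2 → p = p' := by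
    intro p hp p' hp' h
    by_contra hne
    exact (hdisj p hp p' hp' hne).2.2.2 h
  set touched : Finset V := pr.image Prod.fst ∪ pr.image Prod.snd with htcdef
  have htouchD : touched ⊆ D := by
    intro w hw
    rw [htcdef, Finset.mem_union, Finset.mem_image, Finset.mem_image] at hw
    rcases hw with ⟨p, hp, rfl⟩ | ⟨p, hp, rfl⟩
    · exact (hprmem p hp).1
    · exact (hprmem p hp).2.1
  have hsingles : ∀ v ∈ D, v ∉ touched → ∀ w ∈ D, ¬ M.μ w v = 1 := by
    intro v hvD hvt w hwD hmw
    have hwv : w ≠ v := by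
      intro h; rw [h] at hmw; exact hloop v hmw
    have hfne : f w ≠ f v := fun h => hwv (hfinj h)
    apply hvt
    rw [htcdef, Finset.mem_union, Finset.mem_image, Finset.mem_image]
    rcases Nat.lt_or_ge (f w) (f v) with hlt | hge
    · right
      refine ⟨(w, v), ?_, rfl⟩
      rw [hpr, Finset.mem_filter, Finset.mem_product]
      exact ⟨⟨hwD, hvD⟩, hmw, hlt⟩
    · left
      have hlt : f v < f w := by omega
      refine ⟨(v, w), ?_, rfl⟩
      rw [hpr, Finset.mem_filter, Finset.mem_product]
      exact ⟨⟨hvD, hwD⟩, hsymm1 _ _ hmw, hlt⟩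
  set j : ℕ := min r pr.card with hjdef
  obtain ⟨P', hP'sub, hP'card⟩ := Finset.exists_subset_card_eq (min_le_right r pr.card)
  set S₁ : Finset V := P'.image Prod.fst ∪ P'.image Prod.snd with hS₁def
  have hfstinjOn : Set.InjOn Prod.fst ↑P' :=
    fun p hp p' hp' h => hfstinj p (hP'sub hp) p' (hP'sub hp') h
  have hsndinjOn : Set.InjOn Prod.snd ↑P' :=
    fun p hp p' hp' h => hsndinj p (hP'sub hp) p' (hP'sub hp') h
  have hdisjS₁ : Disjoint (P'.image Prod.fst) (P'.image Prod.snd) := by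
    rw [Finset.disjoint_left]
    intro w hw1 hw2
    rw [Finset.mem_image] at hw1 hw2
    obtain ⟨p, hp, hp1⟩ := hw1
    obtain ⟨p', hp', hp2⟩ := hw2
    by_cases hpp : p = p'
    · subst hpp
      obtain ⟨-, -, -, h4⟩ := hprmem p (hP'sub hp)
      have heq : p.1 = p.2 := by rw [hp1, hp2]
      rw [heq] at h4
      exact lt_irrefl _ h4
    · exact (hdisj p (hP'sub hp) p' (hP'sub hp') hpp).2.1 (by rw [hp1, hp2])
  have hS₁card : S₁.card = 2 * j := by
    rw [hS₁def, Finset.card_union_of_disjoint hdisjS₁,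
      Finset.card_image_of_injOn hfstinjOn, Finset.card_image_of_injOn hsndinjOn, hP'card]
    ring
  set Pool : Finset V := (D \ touched) ∪ (pr \ P').image Prod.fst with hPooldef
  have hPoolD : Pool ⊆ D := by
    intro w hw
    rw [hPooldef, Finset.mem_union] at hw
    rcases hw with hw | hw
    · exact (Finset.mem_sdiff.mp hw).1
    · rw [Finset.mem_image] at hw
      obtain ⟨p, hp, rfl⟩ := hw
      exact (hprmem p (Finset.mem_sdiff.mp hp).1).1
  have hS₁D : S₁ ⊆ D := by
    intro w hw
    rw [hS₁def, Finset.mem_union, Finset.mem_image, Finset.mem_image] at hw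
    rcases hw with ⟨p, hp, rfl⟩ | ⟨p, hp, rfl⟩
    · exact (hprmem p (hP'sub hp)).1
    · exact (hprmem p (hP'sub hp)).2.1
  have hPoolcard : Pool.card = (D.card - touched.card) + (pr.card - j) := by
    rw [hPooldef, Finset.card_union_of_disjoint, Finset.card_sdiff_of_subset htouchD,
      Finset.card_image_of_injOn
        (fun p hp p' hp' h => hfstinj p (Finset.mem_sdiff.mp hp).1 p'
          (Finset.mem_sdiff.mp hp').1 h),
      Finset.card_sdiff_of_subset hP'sub, hP'card]
    · rw [Finset.disjoint_left]
      intro w hw1 hw2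
      rw [Finset.mem_sdiff] at hw1
      apply hw1.2
      rw [Finset.mem_image] at hw2
      obtain ⟨p, hp, rfl⟩ := hw2
      rw [htcdef, Finset.mem_union, Finset.mem_image]
      exact Or.inl ⟨p, (Finset.mem_sdiff.mp hp).1, rfl⟩
  have htouchcard : touched.card ≤ 2 * pr.card := by
    calc touched.card ≤ (pr.image Prod.fst).card + (pr.image Prod.snd).card :=
          Finset.card_union_le _ _
      _ ≤ pr.card + pr.card := Nat.add_le_add (Finset.card_image_le) (Finset.card_image_le)
      _ = 2 * pr.card := by ring
  have htouchD' : touched.card ≤ D.card := Finset.card_le_card htouchD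
  have hpoolbig : s - 2*j ≤ Pool.card := by
    rw [hPoolcard]
    have hjr : j ≤ r := min_le_left _ _
    have hjp : j ≤ pr.card := min_le_right _ _
    have hcase : j = r ∨ j = pr.card := by omega
    omega
  obtain ⟨Pool₂, hPool₂sub, hPool₂card⟩ := Finset.exists_subset_card_eq hpoolbig
  set Sfin : Finset V := S₁ ∪ Pool₂ with hSfindef
  have hSfinD : Sfin ⊆ D := by
    rw [hSfindef]
    exact Finset.union_subset hS₁D (hPool₂sub.trans hPoolD)
  have hdisjfin : Disjoint S₁ Pool₂ := by
    rw [Finset.disjoint_left]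
    intro w hw1 hw2
    have hw2' := hPool₂sub hw2
    rw [hS₁def, Finset.mem_union, Finset.mem_image, Finset.mem_image] at hw1
    rw [hPooldef, Finset.mem_union] at hw2'
    have hwtouched : w ∈ touched := by
      rw [htcdef, Finset.mem_union, Finset.mem_image, Finset.mem_image]
      rcases hw1 with ⟨p, hp, hpw⟩ | ⟨p, hp, hpw⟩
      · exact Or.inl ⟨p, hP'sub hp, hpw⟩
      · exact Or.inr ⟨p, hP'sub hp, hpw⟩
    rcases hw2' with hw2' | hw2'
    · exact (Finset.mem_sdiff.mp hw2').2 hwtouched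
    · rw [Finset.mem_image] at hw2'
      obtain ⟨q, hq, hqw⟩ := hw2'
      rw [Finset.mem_sdiff] at hq
      rcases hw1 with ⟨p, hp, hpw⟩ | ⟨p, hp, hpw⟩
      · have hpq : p ≠ q := fun h => hq.2 (h ▸ hp)
        exact (hdisj p (hP'sub hp) q hq.1 hpq).1 (by rw [hpw, hqw])
      · have hpq : p ≠ q := fun h => hq.2 (h ▸ hp)
        exact (hdisj p (hP'sub hp) q hq.1 hpq).2.2.1 (by rw [hpw, hqw])
  have hSfincard : Sfin.card = s := by
    rw [hSfindef, Finset.card_union_of_disjoint hdisjfin, hS₁card, hPool₂card]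
    have hjr : j ≤ r := min_le_left _ _
    omega
  -- the key neighbor analysis inside Sfin
  have hkey : ∀ u ∈ Sfin, ∀ v ∈ Sfin, M.μ u v = 1 → ((u, v) ∈ P' ∨ (v, u) ∈ P') := by
    intro u hu v hv hmuv
    have huD : u ∈ D := hSfinD hu
    have hvD : v ∈ D := hSfinD hv
    rw [hSfindef, Finset.mem_union] at hu
    rcases hu with hu1 | hu2
    · -- u is an endpoint of some p ∈ P'
      rw [hS₁def, Finset.mem_union, Finset.mem_image, Finset.mem_image] at hu1
      rcases hu1 with ⟨p, hp, hpu⟩ | ⟨p, hp, hpu⟩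
      · -- u = p.1 ; unique neighbor is p.2
        obtain ⟨h1, h2, h3, h4⟩ := hprmem p (hP'sub hp)
        have : v = p.2 := by
          apply huniq u huD v hvD (hsymm1 _ _ hmuv) p.2 h2
          rw [← hpu]
          exact hsymm1 _ _ h3
        left
        have : (u, v) = p := by rw [this, ← hpu]
        rw [this]
        exact hp
      · -- u = p.2 ; unique neighbor is p.1
        obtain ⟨h1, h2, h3, h4⟩ := hprmem p (hP'sub hp)
        have : v = p.1 := by
          apply huniq u huD v hvD (hsymm1 _ _ hmuv) p.1 h1
          rw [← hpu]
          exact h3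
        right
        have : (v, u) = p := by rw [this, ← hpu]
        rw [this]
        exact hp
    · -- u ∈ Pool₂
      have hu2' := hPool₂sub hu2
      rw [hPooldef, Finset.mem_union] at hu2'
      rcases hu2' with hu3 | hu3
      · -- u is a single: no neighbors at all
        rw [Finset.mem_sdiff] at hu3
        exact absurd (hsymm1 _ _ hmuv) (hsingles u hu3.1 hu3.2 v hvD)
      · -- u = q.1 for q ∈ pr \ P' : unique neighbor q.2 is not in Sfin
        exfalso
        rw [Finset.mem_image] at hu3
        obtain ⟨q, hq, hqu⟩ := hu3
        rw [Finset.mem_sdiff] at hq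
        obtain ⟨h1, h2, h3, h4⟩ := hprmem q hq.1
        have hvq2 : v = q.2 := by
          apply huniq u huD v hvD (hsymm1 _ _ hmuv) q.2 h2
          rw [← hqu]
          exact hsymm1 _ _ h3
        -- show q.2 ∉ Sfin
        rw [hSfindef, Finset.mem_union] at hv
        rcases hv with hv1 | hv2
        · rw [hS₁def, Finset.mem_union, Finset.mem_image, Finset.mem_image] at hv1
          rcases hv1 with ⟨p, hp, hpv⟩ | ⟨p, hp, hpv⟩
          · have hpq : q ≠ p := fun h => hq.2 (h ▸ hp)
            exact (hdisj q hq.1 p (hP'sub hp) hpq).2.2.1 (by rw [← hvq2, hpv])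
          · have hpq : q ≠ p := fun h => hq.2 (h ▸ hp)
            exact (hdisj q hq.1 p (hP'sub hp) hpq).2.2.2 (by rw [← hvq2, hpv])
        · have hv2' := hPool₂sub hv2
          rw [hPooldef, Finset.mem_union] at hv2'
          rcases hv2' with hv3 | hv3
          · rw [Finset.mem_sdiff] at hv3
            apply hv3.2
            rw [htcdef, Finset.mem_union, Finset.mem_image, Finset.mem_image]
            exact Or.inr ⟨q, hq.1, hvq2.symm⟩
          · rw [Finset.mem_image] at hv3
            obtain ⟨q', hq', hq'v⟩ := hv3
            rw [Finset.mem_sdiff] at hq'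
            by_cases hqq' : q = q'
            · subst hqq'
              rw [← hq'v] at hvq2
              rw [hvq2] at h4
              omega
            · exact (hdisj q hq.1 q' hq'.1 hqq').2.2.1 (by rw [← hvq2, hq'v])
  -- assemble
  refine ⟨j, min_le_left _ _, Sfin, P', hSfincard, hP'card, ?_, ?_, ?_⟩
  · intro p hp
    obtain ⟨h1, h2, h3, h4⟩ := hprmem p (hP'sub hp)
    refine ⟨?_, ?_, ?_, h3⟩
    · rw [hSfindef, Finset.mem_union, hS₁def, Finset.mem_union, Finset.mem_image]
      exact Or.inl (Or.inl ⟨p, hp, rfl⟩)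
    · rw [hSfindef, Finset.mem_union, hS₁def, Finset.mem_union, Finset.mem_image,
        Finset.mem_image]
      exact Or.inl (Or.inr ⟨p, hp, rfl⟩)
    · intro h
      rw [h] at h4
      omega
  · intro p hp p' hp' hne
    exact hdisj p (hP'sub hp) p' (hP'sub hp') hne
  · intro u hu v hv huv hT1 hT2
    rcases hmu u (hSfinD hu) v (hSfinD hv) huv with h1 | h2
    · rcases hkey u hu v hv h1 with h | h
      · exact absurd h hT1
      · exact absurd h hT2
    · exact h2


lemma sum_dR (M : StdMultigraph V) (n : ℕ) (hn : Fintype.card V = n) :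
    (∑ w, ∑ z, dR M w z) = 2*(n:ℝ)^2 - 2*(n:ℝ) - ∑ u, ∑ v, (M.μ u v : ℝ) := by
  have hrow : ∀ w, (∑ z, dR M w z) = (∑ z, (2 - (M.μ w z : ℝ))) - 2 := by
    intro w
    have h1 : ∀ z, dR M w z
        = (2 - (M.μ w z:ℝ)) - (if w = z then (2 - (M.μ w z:ℝ)) else 0) := by
      intro z
      unfold dR
      by_cases h : w = z
      · rw [if_pos h, if_pos h]; ring
      · rw [if_neg h, if_neg h]; ring
    rw [Finset.sum_congr rfl (fun z _ => h1 z), Finset.sum_sub_distrib, Finset.sum_ite_eq]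
    rw [if_pos (Finset.mem_univ w), M.loopless]
    push_cast
    ring
  rw [Finset.sum_congr rfl (fun w _ => hrow w), Finset.sum_sub_distrib]
  have h2 : ∀ w, (∑ z, (2 - (M.μ w z:ℝ))) = 2*(n:ℝ) - ∑ z, (M.μ w z : ℝ) := by
    intro w
    rw [Finset.sum_sub_distrib, Finset.sum_const, Finset.card_univ, hn, nsmul_eq_mul]
    ring
  rw [Finset.sum_congr rfl (fun w _ => h2 w), Finset.sum_sub_distrib, Finset.sum_const,
    Finset.sum_const, Finset.card_univ, hn, nsmul_eq_mul, nsmul_eq_mul]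
  ring

lemma RQ_unif (M : StdMultigraph V) (n : ℕ) (hn : Fintype.card V = n) (hnpos : 0 < n) :
    RQ M (fun _ => (n:ℝ)⁻¹)
      = (n:ℝ)⁻¹ + (1/2) * (n:ℝ)⁻¹ * (n:ℝ)⁻¹ * (∑ w, ∑ z, dR M w z) := by
  have hnR : (0:ℝ) < n := by exact_mod_cast hnpos
  unfold RQ
  have e1 : (∑ v : V, ((n:ℝ)⁻¹)^2) = (n:ℝ)⁻¹ := by
    rw [Finset.sum_const, Finset.card_univ, hn, nsmul_eq_mul]
    field_simp
  have e2 : ∀ w : V, (∑ z, dR M w z * (n:ℝ)⁻¹) = (n:ℝ)⁻¹ * ∑ z, dR M w z := by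
    intro w
    rw [Finset.mul_sum]
    exact Finset.sum_congr rfl (fun z _ => mul_comm _ _)
  rw [e1]
  congr 1
  rw [Finset.sum_congr rfl (fun w _ => by rw [e2 w] : ∀ w ∈ Finset.univ,
    (n:ℝ)⁻¹ * (∑ z, dR M w z * (n:ℝ)⁻¹) = (n:ℝ)⁻¹ * ((n:ℝ)⁻¹ * ∑ z, dR M w z))]
  rw [← Finset.mul_sum, ← Finset.mul_sum]
  ring

end Stmt9

open Stmt9

/-- If `s ≥ 2`, `0 ≤ r ≤ (s-1)/2`, and an `n`-vertex standard
multigraph has `e(M) > (1 - 1/(2(s-1-r)))n²` (equivalently the doubled sum bound),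
then `M` contains `𝕂_s − ℳ_q` for some integer `0 ≤ q ≤ r`. -/
theorem stmt_9 {V : Type*} [Fintype V] [DecidableEq V] (s r : ℕ) (hs : 2 ≤ s)
    (hr : 2 * r ≤ s - 1)
    (M : StdMultigraph V) (n : ℕ) (hn : Fintype.card V = n)
    (he : 2 * (1 - 1 / (2 * ((s : ℝ) - 1 - (r : ℝ)))) * (n : ℝ) ^ 2
      < ∑ u : V, ∑ v : V, (M.μ u v : ℝ)) :
    ∃ q : ℕ, q ≤ r ∧ HasKMinusMatching M s q := by
  classical
  set K : ℕ := s - 1 - r with hKdef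
  have hK1 : 1 ≤ K := by omega
  have hKcast : ((K:ℝ)) = (s:ℝ) - 1 - (r:ℝ) := by
    have h1 : r ≤ s - 1 := by omega
    have h2 : 1 ≤ s := by omega
    rw [hKdef]
    push_cast [Nat.cast_sub h1, Nat.cast_sub h2]
    ring
  have hKR : (0:ℝ) < (K:ℝ) := by exact_mod_cast hK1
  rw [← hKcast] at he
  rcases Nat.eq_zero_or_pos n with hn0 | hnpos
  · exfalso
    have hVempty : IsEmpty V := by
      rw [← Fintype.card_eq_zero_iff, hn, hn0]
    have hzero : (∑ u : V, ∑ v : V, (M.μ u v : ℝ)) = 0 := by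
      rw [Finset.univ_eq_empty, Finset.sum_empty]
    rw [hzero, hn0] at he
    norm_num at he
  have hNV : Nonempty V := by
    rw [← Fintype.card_pos_iff, hn]
    exact hnpos
  have hnR : (0:ℝ) < (n:ℝ) := by exact_mod_cast hnpos
  have hunifmem : (fun _ : V => (n:ℝ)⁻¹) ∈ stdSimplex ℝ V := by
    constructor
    · intro v; positivity
    · rw [Finset.sum_const, Finset.card_univ, hn, nsmul_eq_mul,
        mul_inv_cancel₀ (ne_of_gt hnR)]
  have hRQunif : RQ M (fun _ => (n:ℝ)⁻¹) < 1/(2*(K:ℝ)) := by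
    rw [RQ_unif M n hn hnpos, sum_dR M n hn]
    set Sμ : ℝ := ∑ u : V, ∑ v : V, (M.μ u v : ℝ) with hSμ
    have key : (n:ℝ)⁻¹ + (1/2) * (n:ℝ)⁻¹ * (n:ℝ)⁻¹ * (2*(n:ℝ)^2 - 2*(n:ℝ) - Sμ)
        = 1 - Sμ/(2*(n:ℝ)^2) := by
      field_simp
      ring
    rw [key]
    have h2n2 : (0:ℝ) < 2*(n:ℝ)^2 := by positivity
    have h3 : (1 - 1/(2*(K:ℝ))) * (2*(n:ℝ)^2) < Sμ := by nlinarith [he]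
    have h4 : 1 - 1/(2*(K:ℝ)) < Sμ / (2*(n:ℝ)^2) := (lt_div_iff₀ h2n2).mpr h3
    linarith
  obtain ⟨x₀, hx₀mem, hx₀min, hx₀supp⟩ := exists_min_minsupp M
  have hx₀RQ : RQ M x₀ < 1/(2*(K:ℝ)) :=
    lt_of_le_of_lt ((isMinOn_iff.mp hx₀min) _ hunifmem) hRQunif
  have hposS : ∀ u ∈ suppF x₀, 0 < x₀ u := by
    intro u hu
    simp only [suppF, Finset.mem_filter, Finset.mem_univ, true_and] at hu
    exact lt_of_le_of_ne (hx₀mem.1 u) (Ne.symm hu)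
  have hstat : ∀ u ∈ suppF x₀, ∀ v ∈ suppF x₀, gQ M x₀ u = gQ M x₀ v := by
    intro u hu v hv
    by_cases huv : u = v
    · rw [huv]
    · exact (stationary M hx₀mem hx₀min huv (hposS u hu) (hposS v hv)).symm
  have hmusupp : ∀ u ∈ suppF x₀, ∀ v ∈ suppF x₀, u ≠ v → M.μ u v ≠ 0 :=
    fun u hu v hv huv =>
      no_mu_zero M hx₀mem hx₀min hx₀supp huv (hposS u hu) (hposS v hv)
  obtain ⟨D, hDsub, hDdiss, hDcard⟩ := count M hx₀mem hstat hmusupp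
  have hlamlt : 2 * RQ M x₀ < 1/(K:ℝ) := by
    have h5 : 2 * (1/(2*(K:ℝ))) = 1/(K:ℝ) := by field_simp
    linarith [hx₀RQ]
  have hcardne : D.card ≠ 0 := by
    intro h0
    rw [h0] at hDcard
    norm_num at hDcard
  have hcard0 : (0:ℝ) < (D.card:ℝ) := by
    exact_mod_cast Nat.pos_of_ne_zero hcardne
  have hcardgt : 2*(K:ℝ) < (D.card:ℝ) := by
    have h1 : (D.card:ℝ) * (2*RQ M x₀) < (D.card:ℝ) * (1/(K:ℝ)) :=
      mul_lt_mul_of_pos_left hlamlt hcard0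
    have h2 : (2:ℝ) < (D.card:ℝ) * (1/(K:ℝ)) := lt_of_le_of_lt hDcard h1
    rw [mul_one_div] at h2
    exact (lt_div_iff₀ hKR).mp h2
  have hDbig : 2*s ≤ D.card + 2*r + 1 := by
    have h6 : 2*K < D.card := by exact_mod_cast hcardgt
    omega
  exact extract M s r (by omega) D hDbig hDdiss (fun u hu v hv huv => by
    have h7 := hmusupp u (hDsub hu) v (hDsub hv) huv
    have h8 := M.le_two u v
    omega)
end

section
/- Let 0 < 25α < 1 and let D be a sufficiently large n-vertex simple directed graph with minimum out-degree δ⁺(D) ≥ (1/2 − α)n and containing no cyclically directed triangle (no three vertices x,y,z with arcs (x,y),(y,z),(z,x)). Then the underlying simple graph G of D is (K₃, 4√α)-extremal: there exist disjoint vertex sets T, U with |T|, |U| ≥ (1/2 − 4√α)n and e(G[T]) = e(G[U]) = 0 (in fact T and U can be taken independent). -/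
/-!
Let `D` have minimum out-degree `δ` and no cyclic triangle. For an arc `u → s`, the
out-neighbourhood of `s` avoids the in-neighbourhood of `u`; hence every in-degree is at most
`n - δ`, and the common neighbourhood `Z(u) = N⁺(u) ∩ N⁻(u)` is independent. If `u` has
in-degree at least `n - δ - k`, every out-neighbour `s` of `u` misses at most `k` vertices of
`N⁻(u)ᶜ`; inside `M = N⁺(u) \ N⁻(u)` out-degrees are therefore at least `|M| - k` and in-degrees
at most `k`, so double counting gives `|M| ≤ 2k` and `|Z(u)| ≥ δ - 2k`.

With `β = √α` and `δ = (1/2 - β²)n`, a vertex `u₁` of in-degree at least `δ` gives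
`|Z(u₁)| ≥ (1/2 - 5β²)n`, while by averaging at most `2βn` vertices have in-degree below `n - δ - βn`. So some `u₂ ∈ Z(u₁)`
has large in-degree, `|Z(u₂)| ≥ (1/2 - β² - 2β)n`, and `Z(u₂)` is disjoint from `Z(u₁)` because
`Z(u₁)` is independent and `Z(u₂) ⊆ N⁺(u₂)`.
-/

open Finset

section DoubleCounting

variable {V : Type*} {D : V → V → Prop} [DecidableRel D]

theorem card_le_two_mul_of_card_filter {M : Finset V} {k : ℝ} (hk : 0 ≤ k)
    (hout : ∀ a ∈ M, (#M : ℝ) - k ≤ #(M.filter (D a ·)))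
    (hin : ∀ a ∈ M, ∀ b ∈ M, D a b → (#(M.filter (D · a)) : ℝ) ≤ k) :
    (#M : ℝ) ≤ 2 * k := by
  rcases le_or_gt (#M : ℝ) k with hMk | hkM
  · linarith
  have hin' : ∀ a ∈ M, (#(M.filter (D · a)) : ℝ) ≤ k := fun a ha => by
    obtain ⟨b, hb⟩ : (M.filter (D a ·)).Nonempty := by
      rw [← card_pos]; exact_mod_cast (sub_pos.2 hkM).trans_le (hout a ha)
    rw [mem_filter] at hb
    exact hin a ha b hb.1 hb.2
  have hsum : (#M : ℝ) * (#M - k) ≤ #M * k := calc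
    (#M : ℝ) * (#M - k) ≤ ∑ a ∈ M, (#(M.filter (D a ·)) : ℝ) := by
      simpa using card_nsmul_le_sum M _ _ hout
    _ = ∑ a ∈ M, (#(M.filter (D · a)) : ℝ) := by
      exact_mod_cast sum_card_bipartiteAbove_eq_sum_card_bipartiteBelow (s := M) (t := M) (r := D)
    _ ≤ #M * k := by simpa using sum_le_card_nsmul M _ _ hin'
  linarith [le_of_mul_le_mul_left hsum (by linarith)]

end DoubleCounting

def NoCyclicTriangle {V : Type*} (D : V → V → Prop) : Prop := ∀ x y z, D x y → D y z → ¬ D z x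

def IsIndependent {V : Type*} (D : V → V → Prop) (s : Finset V) : Prop :=
  ∀ u ∈ s, ∀ v ∈ s, ¬ D u v

section Digraph

variable {V : Type*} [Fintype V] {D : V → V → Prop} [DecidableRel D]

def outNbhd (D : V → V → Prop) [DecidableRel D] (v : V) : Finset V := univ.filter (D v ·)

def inNbhd (D : V → V → Prop) [DecidableRel D] (v : V) : Finset V := univ.filter (D · v)

theorem sum_card_outNbhd_eq_sum_card_inNbhd :
    ∑ v, (#(outNbhd D v) : ℝ) = ∑ v, (#(inNbhd D v) : ℝ) := by
  exact_mod_cast sum_card_bipartiteAbove_eq_sum_card_bipartiteBelow (s := univ) (t := univ) (r := D)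

theorem exists_le_card_inNbhd [Nonempty V] {δ : ℝ} (hδ : ∀ v, δ ≤ #(outNbhd D v)) :
    ∃ u, δ ≤ #(inNbhd D u) := by
  obtain ⟨u, -, hu⟩ := exists_le_of_sum_le univ_nonempty
    ((sum_le_sum fun v _ => hδ v).trans_eq (sum_card_outNbhd_eq_sum_card_inNbhd (D := D)))
  exact ⟨u, hu⟩

theorem mul_card_filter_card_inNbhd_lt_le {δ t : ℝ} (hδ : ∀ v, δ ≤ #(outNbhd D v))
    (hin : ∀ v, (#(inNbhd D v) : ℝ) ≤ Fintype.card V - δ) :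
    t * #(univ.filter fun v => (#(inNbhd D v) : ℝ) < Fintype.card V - δ - t)
      ≤ Fintype.card V * (Fintype.card V - 2 * δ) := by
  have hlow : Fintype.card V * δ ≤ ∑ v, (#(inNbhd D v) : ℝ) := by
    simpa using (sum_le_sum fun v _ => hδ v).trans_eq (sum_card_outNbhd_eq_sum_card_inNbhd (D := D))
  have hhigh : ∑ v, (#(inNbhd D v) : ℝ)
      ≤ ∑ v, ((Fintype.card V - δ) -
        if (#(inNbhd D v) : ℝ) < Fintype.card V - δ - t then t else 0) := by
    refine sum_le_sum fun v _ => ?_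
    split_ifs with hv
    · linarith
    · simpa using hin v
  simp only [sum_sub_distrib, ← sum_filter, sum_const, card_univ, nsmul_eq_mul] at hhigh
  linarith

theorem NoCyclicTriangle.disjoint_outNbhd_inNbhd (hD : NoCyclicTriangle D) {u s : V}
    (hus : D u s) : Disjoint (outNbhd D s) (inNbhd D u) :=
  disjoint_left.2 fun x hsx hxu => hD u s x hus (mem_filter.1 hsx).2 (mem_filter.1 hxu).2

theorem NoCyclicTriangle.card_inNbhd_le (hD : NoCyclicTriangle D) {δ : ℝ} (hδ0 : 0 < δ)
    (hδ : ∀ v, δ ≤ #(outNbhd D v)) (u : V) :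
    (#(inNbhd D u) : ℝ) ≤ Fintype.card V - δ := by
  obtain ⟨s, hs⟩ : (outNbhd D u).Nonempty := by
    rw [← card_pos]; exact_mod_cast hδ0.trans_le (hδ u)
  have hcard : #(outNbhd D s) + #(inNbhd D u) ≤ Fintype.card V := by
    classical
    rw [← card_union_of_disjoint (hD.disjoint_outNbhd_inNbhd (mem_filter.1 hs).2)]
    exact card_le_univ _
  have hcard' : (#(outNbhd D s) : ℝ) + #(inNbhd D u) ≤ Fintype.card V := by exact_mod_cast hcard
  linarith [hδ s]

theorem NoCyclicTriangle.isIndependent_outNbhd_inter_inNbhd [DecidableEq V]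
    (hD : NoCyclicTriangle D) (u : V) : IsIndependent D (outNbhd D u ∩ inNbhd D u) := by
  intro z hz z' hz' hzz'
  simp only [outNbhd, inNbhd, mem_inter, mem_filter, mem_univ, true_and] at hz hz'
  exact hD u z z' hz.1 hzz' hz'.2

theorem NoCyclicTriangle.card_le_of_disjoint_outNbhd [DecidableEq V] (hD : NoCyclicTriangle D)
    {δ k : ℝ} (hδ : ∀ v, δ ≤ #(outNbhd D v)) {u s : V} (hus : D u s)
    (hu : (#(inNbhd D u)ᶜ : ℝ) ≤ δ + k) {P : Finset V} (hP : P ⊆ (inNbhd D u)ᶜ)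
    (hPs : Disjoint P (outNbhd D s)) : (#P : ℝ) ≤ k := by
  have hsub : P ∪ outNbhd D s ⊆ (inNbhd D u)ᶜ :=
    union_subset hP (subset_compl_iff_disjoint_right.2 (hD.disjoint_outNbhd_inNbhd hus))
  have hcard : #P + #(outNbhd D s) ≤ #(inNbhd D u)ᶜ := by
    rw [← card_union_of_disjoint hPs]; exact card_le_card hsub
  have hcard' : (#P : ℝ) + #(outNbhd D s) ≤ #(inNbhd D u)ᶜ := by exact_mod_cast hcard
  linarith [hδ s]

theorem NoCyclicTriangle.card_outNbhd_inter_inNbhd_ge [DecidableEq V]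
    (hD : NoCyclicTriangle D) {δ k : ℝ} (hk : 0 ≤ k) (hδ : ∀ v, δ ≤ #(outNbhd D v)) {u : V}
    (hu : (#(inNbhd D u)ᶜ : ℝ) ≤ δ + k) :
    δ - 2 * k ≤ #(outNbhd D u ∩ inNbhd D u) := by
  set M := outNbhd D u \ inNbhd D u
  have hMu : ∀ a ∈ M, D u a := fun a ha => (mem_filter.1 (mem_sdiff.1 ha).1).2
  have hMc : M ⊆ (inNbhd D u)ᶜ := fun a ha => mem_compl.2 (mem_sdiff.1 ha).2
  have hout : ∀ a ∈ M, (#M : ℝ) - k ≤ #(M.filter (D a ·)) := by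
    intro a ha
    have hmiss : (#(M.filter (¬ D a ·)) : ℝ) ≤ k :=
      hD.card_le_of_disjoint_outNbhd hδ (hMu a ha) hu ((filter_subset _ _).trans hMc)
        (disjoint_left.2 fun t ht hat => (mem_filter.1 ht).2 (mem_filter.1 hat).2)
    have hsplit : (#(M.filter (D a ·)) : ℝ) + #(M.filter (¬ D a ·)) = #M := by
      exact_mod_cast card_filter_add_card_filter_not (s := M) (D a ·)
    linarith
  -- an in-neighbour `t` of `a` is not an out-neighbour of `b`, else `t → a → b → t`
  have hin : ∀ a ∈ M, ∀ b ∈ M, D a b → (#(M.filter (D · a)) : ℝ) ≤ k := fun a _ b hb hab =>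
    hD.card_le_of_disjoint_outNbhd hδ (hMu b hb) hu ((filter_subset _ _).trans hMc)
      (disjoint_left.2 fun t ht hbt => hD a b t hab (mem_filter.1 hbt).2 (mem_filter.1 ht).2)
  have hM := card_le_two_mul_of_card_filter hk hout hin
  have hsplit : (#(outNbhd D u ∩ inNbhd D u) : ℝ) + #M = #(outNbhd D u) := by
    exact_mod_cast card_inter_add_card_sdiff _ _
  linarith [hδ u]

theorem NoCyclicTriangle.exists_disjoint_isIndependent [DecidableEq V]
    (hD : NoCyclicTriangle D) {β : ℝ} (hβ0 : 0 < β) (hβ : β < 1 / 8) (hV : 0 < Fintype.card V)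
    (hδ : ∀ v, (1 / 2 - β ^ 2) * Fintype.card V ≤ #(outNbhd D v)) :
    ∃ T U : Finset V, Disjoint T U ∧ (1 / 2 - 4 * β) * Fintype.card V ≤ #T ∧
      (1 / 2 - 4 * β) * Fintype.card V ≤ #U ∧ IsIndependent D T ∧ IsIndependent D U := by
  have : Nonempty V := Fintype.card_pos_iff.1 hV
  have hn : (0 : ℝ) < Fintype.card V := Nat.cast_pos.2 hV
  set n : ℝ := (Fintype.card V : ℝ)
  have hδ0 : 0 < (1 / 2 - β ^ 2) * n := mul_pos (by nlinarith) hn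
  have hin := hD.card_inNbhd_le hδ0 hδ
  have hcompl (u : V) : (#(inNbhd D u)ᶜ : ℝ) = n - #(inNbhd D u) := by
    rw [card_compl, Nat.cast_sub (card_le_univ _)]
  obtain ⟨u₁, hu₁⟩ := exists_le_card_inNbhd hδ
  set Z₁ := outNbhd D u₁ ∩ inNbhd D u₁
  have hZ₁ : (1 / 2 - 5 * β ^ 2) * n ≤ #Z₁ := by
    have := hD.card_outNbhd_inter_inNbhd_ge (k := 2 * β ^ 2 * n) (by positivity) hδ
      (u := u₁) (by rw [hcompl]; linarith)
    linarith
  set B := univ.filter fun v => (#(inNbhd D v) : ℝ) < n - (1 / 2 - β ^ 2) * n - β * n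
  have hB : (#B : ℝ) ≤ 2 * β * n := by
    have hmarkov := mul_card_filter_card_inNbhd_lt_le (t := β * n) hδ hin
    refine le_of_mul_le_mul_left (a := β * n) ?_ (by positivity)
    linarith
  have hBZ₁ : (#B : ℝ) < #Z₁ := hB.trans_lt (by nlinarith)
  obtain ⟨u₂, hu₂Z₁, hu₂B⟩ := exists_mem_notMem_of_card_lt_card (Nat.cast_lt.1 hBZ₁)
  have hZ₂ := hD.card_outNbhd_inter_inNbhd_ge (k := β * n) (by positivity) hδ (u := u₂) <| by
    simp only [B, mem_filter, mem_univ, true_and, not_lt] at hu₂B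
    rw [hcompl]; linarith
  refine ⟨Z₁, outNbhd D u₂ ∩ inNbhd D u₂, ?_, by nlinarith, by nlinarith,
    hD.isIndependent_outNbhd_inter_inNbhd u₁, hD.isIndependent_outNbhd_inter_inNbhd u₂⟩
  exact disjoint_left.2 fun a ha₁ ha₂ => hD.isIndependent_outNbhd_inter_inNbhd u₁ u₂ hu₂Z₁ a ha₁
    (mem_filter.1 (mem_inter.1 ha₂).1).2

end Digraph

/-- For `0 < 25α < 1` and `n` sufficiently large, every `n`-vertex
simple digraph with minimum out-degree at least `(1/2 - α)n` and no cyclically directed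
triangle has an underlying graph that is `(K₃, 4√α)`-extremal: there are two disjoint
independent sets each of size at least `(1/2 - 4√α)n`. -/
theorem stmt_10 :
    ∀ α : ℝ, 0 < α → 25 * α < 1 →
    ∃ n₀ : ℕ, ∀ n : ℕ, n₀ ≤ n →
    ∀ (V : Type) (_ : Fintype V) (_ : DecidableEq V)
      (D : V → V → Prop) (_ : DecidableRel D),
      Fintype.card V = n →
      (∀ v, ¬ D v v) →
      (∀ v : V, ((1 : ℝ) / 2 - α) * (n : ℝ)
        ≤ ((Finset.univ.filter (fun w => D v w)).card : ℝ)) →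
      (¬ ∃ x y z : V, D x y ∧ D y z ∧ D z x) →
      ∃ T U : Finset V, Disjoint T U ∧
        ((1 : ℝ) / 2 - 4 * Real.sqrt α) * (n : ℝ) ≤ T.card ∧
        ((1 : ℝ) / 2 - 4 * Real.sqrt α) * (n : ℝ) ≤ U.card ∧
        (∀ u ∈ T, ∀ v ∈ T, ¬ D u v) ∧
        (∀ u ∈ U, ∀ v ∈ U, ¬ D u v) := by
  intro α hα _
  refine ⟨1, fun n hn V _ _ D _ hcard _ hdeg htri => ?_⟩
  subst hcard
  rcases lt_or_ge (Real.sqrt α) (1 / 8) with hβ | hβ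
  · rw [← Real.sq_sqrt hα.le] at hdeg
    exact NoCyclicTriangle.exists_disjoint_isIndependent
      (fun x y z hxy hyz hzx => htri ⟨x, y, z, hxy, hyz, hzx⟩) (Real.sqrt_pos.2 hα) hβ hn hdeg
  · have hneg : ((1 : ℝ) / 2 - 4 * Real.sqrt α) * Fintype.card V ≤ 0 :=
      mul_nonpos_of_nonpos_of_nonneg (by linarith) (Nat.cast_nonneg _)
    exact ⟨∅, ∅, disjoint_empty_left _, by simpa using hneg, by simpa using hneg,
      by simp, by simp⟩
end

section
/- Let D be an n-vertex simple directed graph with no cyclically directed triangle. Fix a vertex u₁, set I₁ = N⁻_D(u₁) (in-neighborhood) and O₁* = N⁺_D(u₁) ∖ I₁. Suppose u₀ ∈ O₁* satisfies d⁺_D(u₀, O₁*) ≤ |O₁*|/2. Then d⁺_D(u₀) ≤ n − |O₁*|/2 − d⁻_D(u₁). Consequently, if additionally d⁻_D(u₁) ≥ δ⁺(D) and d⁺_D(u₀) ≥ δ⁺(D), then |N⁺_D(u₁) ∖ N⁻_D(u₁)| = |O₁*| ≤ 2n − 4δ⁺(D). -/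
/-!
Because `D` has no cyclic triangle and `u₁ → u₀`, the sets `N⁺(u₀)`, `N⁻(u₁)` and
`O₁* ∖ N⁺(u₀)` are pairwise disjoint, so their sizes add up to at most `n`; the hypothesis on
`u₀` says the last one has at least `|O₁*|/2` elements.
-/

open Finset

theorem card_add_card_add_card_le_card_add_card_inter {V : Type*} [Fintype V] [DecidableEq V]
    {A I O : Finset V} (hAI : Disjoint A I) (hOI : Disjoint O I) :
    #A + #I + #O ≤ Fintype.card V + #(O ∩ A) := by
  have hunion : #(A ∪ O) + #I ≤ Fintype.card V := by
    rw [← card_union_of_disjoint (disjoint_union_left.mpr ⟨hAI, hOI⟩)]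
    exact card_le_univ _
  have := card_union_add_card_inter A O
  rw [inter_comm] at this
  omega

theorem disjoint_outNbhd_inNbhd_of_not_cyclic_triangle {V : Type*} [Fintype V]
    (D : V → V → Prop) [DecidableRel D]
    (htri : ¬ ∃ x y z : V, D x y ∧ D y z ∧ D z x) {u₁ u₀ : V} (h : D u₁ u₀) :
    Disjoint (univ.filter (D u₀ ·)) (univ.filter (D · u₁)) := by
  rw [disjoint_left]
  intro w hw₀ hw₁
  simp only [mem_filter, mem_univ, true_and] at hw₀ hw₁
  exact htri ⟨u₀, w, u₁, hw₀, hw₁, h⟩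

theorem stmt_11_general {V : Type*} [Fintype V] [DecidableEq V]
    (D : V → V → Prop) [DecidableRel D]
    (htri : ¬ ∃ x y z : V, D x y ∧ D y z ∧ D z x)
    (n : ℕ) (hn : Fintype.card V = n) (u₁ u₀ : V)
    (I₁ O₁ : Finset V)
    (hI : I₁ = Finset.univ.filter (fun w => D w u₁))
    (hO : O₁ = (Finset.univ.filter (fun w => D u₁ w)) \ I₁)
    (hu₀ : u₀ ∈ O₁)
    (hdeg : ((O₁.filter (fun w => D u₀ w)).card : ℝ) ≤ (O₁.card : ℝ) / 2) :
    ((Finset.univ.filter (fun w => D u₀ w)).card : ℝ)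
        ≤ (n : ℝ) - (O₁.card : ℝ) / 2
          - ((Finset.univ.filter (fun w => D w u₁)).card : ℝ) ∧
    ∀ δ : ℝ, δ ≤ ((Finset.univ.filter (fun w => D w u₁)).card : ℝ) →
      δ ≤ ((Finset.univ.filter (fun w => D u₀ w)).card : ℝ) →
      (O₁.card : ℝ) ≤ 2 * (n : ℝ) - 4 * δ := by
  subst hI
  have hu₁u₀ : D u₁ u₀ := by
    rw [hO] at hu₀
    simpa using (mem_sdiff.mp hu₀).1
  have hOI : Disjoint O₁ (univ.filter (D · u₁)) := hO ▸ sdiff_disjoint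
  have hcount := card_add_card_add_card_le_card_add_card_inter
    (disjoint_outNbhd_inNbhd_of_not_cyclic_triangle D htri hu₁u₀) hOI
  have hinter : O₁.filter (D u₀ ·) = O₁ ∩ univ.filter (D u₀ ·) := by
    ext w; simp
  rw [← hinter, hn] at hcount
  have hcount' : (#(univ.filter (D u₀ ·)) : ℝ) + #(univ.filter (D · u₁)) + #O₁
      ≤ n + #(O₁.filter (D u₀ ·)) := by exact_mod_cast hcount
  exact ⟨by linarith, fun δ hδ₁ hδ₀ => by linarith⟩

/-- In a simple digraph with no cyclically directed triangle:
with `I₁ = N⁻(u₁)`, `O₁* = N⁺(u₁) ∖ I₁`, and `u₀ ∈ O₁*` satisfying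
`d⁺(u₀, O₁*) ≤ |O₁*|/2`, one has `d⁺(u₀) ≤ n − |O₁*|/2 − d⁻(u₁)`; consequently,
if `d⁻(u₁) ≥ δ` and `d⁺(u₀) ≥ δ` then `|O₁*| ≤ 2n − 4δ`. -/
theorem stmt_11 {V : Type*} [Fintype V] [DecidableEq V]
    (D : V → V → Prop) [DecidableRel D] (hirr : ∀ v, ¬ D v v)
    (htri : ¬ ∃ x y z : V, D x y ∧ D y z ∧ D z x)
    (n : ℕ) (hn : Fintype.card V = n) (u₁ u₀ : V)
    (I₁ O₁ : Finset V)
    (hI : I₁ = Finset.univ.filter (fun w => D w u₁))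
    (hO : O₁ = (Finset.univ.filter (fun w => D u₁ w)) \ I₁)
    (hu₀ : u₀ ∈ O₁)
    (hdeg : ((O₁.filter (fun w => D u₀ w)).card : ℝ) ≤ (O₁.card : ℝ) / 2) :
    ((Finset.univ.filter (fun w => D u₀ w)).card : ℝ)
        ≤ (n : ℝ) - (O₁.card : ℝ) / 2
          - ((Finset.univ.filter (fun w => D w u₁)).card : ℝ) ∧
    ∀ δ : ℝ, δ ≤ ((Finset.univ.filter (fun w => D w u₁)).card : ℝ) →
      δ ≤ ((Finset.univ.filter (fun w => D u₀ w)).card : ℝ) →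
      (O₁.card : ℝ) ≤ 2 * (n : ℝ) - 4 * δ :=
  stmt_11_general D htri n hn u₁ u₀ I₁ O₁ hI hO hu₀ hdeg
end

section
/- Every edge-colored graph (G,c) admits a spanning subgraph F ⊆ G such that (F, c|_{E(F)}) is edge-minimal (contains no monochromatic path on three edges) and color-degree preserving: d^{c_F}_F(v) = d^c_G(v) for every vertex v. -/
/-!
Among all subgraphs of `G` that have the same set of colors as `G` at every vertex, take a
minimal one `F`. If `F` contained a monochromatic path `a b x y`, the color of the middle edge
`bx` would still be present at `b` (through `ba`) and at `x` (through `xy`) after deleting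
`bx`, contradicting minimality.
-/

namespace SimpleGraph

variable {V α : Type*}

/-- The color degree `d^c_G(v)` is the cardinality of this set. -/
def colorsAt (G : SimpleGraph V) (c : Sym2 V → α) (v : V) : Set α :=
  (fun w => c s(v, w)) '' G.neighborSet v

lemma deleteEdges_singleton_lt {F : SimpleGraph V} {e : Sym2 V} (he : e ∈ F.edgeSet) :
    F.deleteEdges {e} < F :=
  (F.deleteEdges_le _).lt_of_ne (by simpa using he)

lemma colorsAt_mono {F G : SimpleGraph V} (h : F ≤ G) (c : Sym2 V → α) (v : V) :
    F.colorsAt c v ⊆ G.colorsAt c v :=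
  Set.image_mono fun _ hw => h hw

lemma colorsAt_deleteEdges_singleton {F : SimpleGraph V} {c : Sym2 V → α} {e : Sym2 V}
    (h : ∀ u ∈ e, ∃ z, F.Adj u z ∧ s(u, z) ≠ e ∧ c s(u, z) = c e) (v : V) :
    (F.deleteEdges {e}).colorsAt c v = F.colorsAt c v := by
  refine (colorsAt_mono (F.deleteEdges_le _) c v).antisymm ?_
  rintro _ ⟨w, hvw, rfl⟩
  by_cases hvwe : s(v, w) = e
  · obtain ⟨z, hvz, hvze, hcz⟩ := h v (hvwe ▸ Sym2.mem_mk_left v w)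
    exact ⟨z, (deleteEdges_adj ..).2 ⟨hvz, hvze⟩, hcz.trans (congrArg c hvwe).symm⟩
  · exact ⟨w, (deleteEdges_adj ..).2 ⟨hvw, hvwe⟩, rfl⟩

lemma not_monochromatic_path_of_minimal {G F : SimpleGraph V} {c : Sym2 V → α}
    (hF : Minimal (fun H => H ≤ G ∧ ∀ v, H.colorsAt c v = G.colorsAt c v) F)
    {a b x y : V} (hab : F.Adj a b) (hbx : F.Adj b x) (hxy : F.Adj x y) (hax : a ≠ x)
    (hby : b ≠ y) (habx : c s(a, b) = c s(b, x)) (hbxy : c s(b, x) = c s(x, y)) : False := by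
  have hdel : ∀ v, (F.deleteEdges {s(b, x)}).colorsAt c v = F.colorsAt c v := by
    refine colorsAt_deleteEdges_singleton fun u hu => ?_
    rcases Sym2.mem_iff.1 hu with rfl | rfl
    · exact ⟨a, hab.symm, by simp [hax, hab.ne], by rw [Sym2.eq_swap, habx]⟩
    · exact ⟨y, hxy, by simp [hby.symm, hbx.ne'], hbxy.symm⟩
  have hlt := deleteEdges_singleton_lt (e := s(b, x)) hbx
  exact hlt.not_ge <| hF.2
    ⟨(F.deleteEdges_le _).trans hF.1.1, fun v => (hdel v).trans (hF.1.2 v)⟩ hlt.le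

end SimpleGraph

/-- Every edge-colored graph `(G, c)` admits a spanning subgraph `F`
that is edge-minimal (no monochromatic path on three edges) and preserves the color
degree of every vertex. -/
theorem stmt_18 {V : Type*} [Fintype V] (G : SimpleGraph V) (c : Sym2 V → ℕ) :
    ∃ F : SimpleGraph V, F ≤ G ∧
      (∀ a b x y : V, F.Adj a b → F.Adj b x → F.Adj x y →
        a ≠ x → b ≠ y → a ≠ y →
        ¬ (c s(a, b) = c s(b, x) ∧ c s(b, x) = c s(x, y))) ∧
      (∀ v : V, ((fun w => c s(v, w)) '' (F.neighborSet v)).ncard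
        = ((fun w => c s(v, w)) '' (G.neighborSet v)).ncard) := by
  obtain ⟨F, hF⟩ := exists_minimal_of_wellFoundedLT
    (fun H => H ≤ G ∧ ∀ v, H.colorsAt c v = G.colorsAt c v) ⟨G, le_rfl, fun _ => rfl⟩
  refine ⟨F, hF.1.1, ?_, fun v => congrArg Set.ncard (hF.1.2 v)⟩
  rintro a b x y hab hbx hxy hax hby - ⟨habx, hbxy⟩
  exact SimpleGraph.not_monochromatic_path_of_minimal hF hab hbx hxy hax hby habx hbxy
end
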